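/- arXiv:1307.1901 — 6 statements merged into one kernel-verified Lean document; each statement's English description precedes it below -/
import Mathlib

section
/- Let n, k ≥ 0 and let λ be a partition with ℓ(λ) ≤ n and λ₁ ≤ k. Define α_i = λ_{n+1−i} + i for 1 ≤ i ≤ n and β_j = n + j − λ†_j for 1 ≤ j ≤ k, and let s = (β_k, β_{k−1}, …, β_1, α_n, α_{n−1}, …, α_1) be the concatenated sequence of length n+k. Then the number of inversions of s, namely #{(p,q) : 1 ≤ p < q ≤ n+k, s_p < s_q}, equals |λ|. -/
/-- A partition: a weakly decreasing sequence of nonnegative integers, indexed starting at 1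
(`f 0 = 0` by convention), with finitely many nonzero terms. `f i` is the part `λ_i`. -/
structure YPartition where
  f : ℕ → ℕ
  f_zero : f 0 = 0
  antitone : ∀ ⦃i j : ℕ⦄, 1 ≤ i → i ≤ j → f j ≤ f i
  ev_zero : ∃ N, ∀ i, N ≤ i → f i = 0

namespace YPartition

/-- The number of nonzero parts `ℓ(λ)`. -/
noncomputable def len (p : YPartition) : ℕ := sSup {i | p.f i ≠ 0}

/-- The size `|λ| = Σ_i λ_i`. -/
noncomputable def size (p : YPartition) : ℕ := ∑ᶠ i, p.f i

/-- The transpose (conjugate): `g† j = #{i ≥ 1 : g i ≥ j}`. -/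
noncomputable def conjFun (g : ℕ → ℕ) (j : ℕ) : ℕ := Set.ncard {i | 1 ≤ i ∧ j ≤ g i}

/-- Containment of partitions: `ν ⊆ μ`. -/
def Sub (ν μ : YPartition) : Prop := ∀ i, ν.f i ≤ μ.f i

/-- The cells (boxes) of the skew diagram `μ/ν`: pairs `(i,j)` with `i ≥ 1` and
`ν_i < j ≤ μ_i`. -/
def cells (μ ν : YPartition) : Set (ℕ × ℕ) :=
  {c | 1 ≤ c.1 ∧ ν.f c.1 < c.2 ∧ c.2 ≤ μ.f c.1}

/-- Two boxes share an edge. -/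
def Adj (a b : ℕ × ℕ) : Prop :=
  (a.1 = b.1 ∧ (a.2 + 1 = b.2 ∨ b.2 + 1 = a.2)) ∨
  (a.2 = b.2 ∧ (a.1 + 1 = b.1 ∨ b.1 + 1 = a.1))

/-- A set of boxes is connected if any two of its boxes are joined by a chain of its
boxes, each sharing an edge with the next. -/
def IsConnected (s : Set (ℕ × ℕ)) : Prop :=
  ∀ a ∈ s, ∀ b ∈ s, Relation.ReflTransGen (fun x y => x ∈ s ∧ y ∈ s ∧ Adj x y) a b

/-- `μ/ν` is a border strip: `ν ⊆ μ`, and the skew diagram is nonempty, connected,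
and contains no 2×2 square. -/
def IsBorderStrip (μ ν : YPartition) : Prop :=
  Sub ν μ ∧ (cells μ ν).Nonempty ∧ IsConnected (cells μ ν) ∧
    ¬ ∃ i j : ℕ, (i, j) ∈ cells μ ν ∧ (i + 1, j) ∈ cells μ ν ∧
      (i, j + 1) ∈ cells μ ν ∧ (i + 1, j + 1) ∈ cells μ ν

/-- The number of boxes of `μ/ν`. -/
noncomputable def stripSize (μ ν : YPartition) : ℕ := (cells μ ν).ncard

/-- The number of rows that `μ/ν` occupies. -/
noncomputable def rows (μ ν : YPartition) : ℕ := (Prod.fst '' cells μ ν).ncard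

/-- The number of columns that `μ/ν` occupies. -/
noncomputable def cols (μ ν : YPartition) : ℕ := (Prod.snd '' cells μ ν).ncard

/-- The graph of the symplectic modification rule: `ModRule n μ i τ` holds iff
`i_{2n}(μ) = i < ∞` and `τ_{2n}(μ) = τ`. -/
inductive ModRule (n : ℕ) : YPartition → ℕ → YPartition → Prop
  | base (μ : YPartition) (h : μ.len ≤ n) : ModRule n μ 0 μ
  | step (μ ν τ : YPartition) (i : ℕ)
      (hlen : n < μ.len)
      (hbs : IsBorderStrip μ ν)
      (hsize : stripSize μ ν = 2 * (μ.len - n - 1))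
      (hbox : (μ.len, 1) ∈ cells μ ν)
      (hrec : ModRule n ν i τ) :
      ModRule n μ (cols μ ν + i) τ

/-- `i_{2n}(μ) ∈ ℕ∞`; it is `⊤ = ∞` exactly when the modification rule fails. -/
noncomputable def i2 (n : ℕ) (μ : YPartition) : ℕ∞ :=
  sInf {c | ∃ i τ, ModRule n μ i τ ∧ c = (i : ℕ∞)}

-- `τ_{2n}(μ)`, defined (arbitrarily, as `μ` itself) when `i_{2n}(μ) = ∞`.
open Classical in
noncomputable def tau (n : ℕ) (μ : YPartition) : YPartition :=
  if h : ∃ it : ℕ × YPartition, ModRule n μ it.1 it.2 then h.choose.2 else μ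

end YPartition

/-!
Since `λ` and `λ†` are weakly decreasing, `α` and `β` are strictly increasing, so both blocks of
`s` are strictly decreasing and every inversion pairs some `β_j` with some `α_i`. By the
transpose duality `m ≤ λ†_j ↔ j ≤ λ_m`, we have `β_j < α_i` exactly when `j ≤ λ_{n+1-i}`, so
`α_i` takes part in exactly `λ_{n+1-i}` inversions; summing over `i` gives `|λ|`.
-/

open Finset

lemma filter_inversions_eq_of_strictAntiOn {α : Type*} [LinearOrder α] {s : ℕ → α} {k N : ℕ}
    (hl : StrictAntiOn s (Set.Icc 1 k)) (hr : StrictAntiOn s (Set.Icc (k + 1) N)) :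
    ((Icc 1 N ×ˢ Icc 1 N).filter fun pq => pq.1 < pq.2 ∧ s pq.1 < s pq.2) =
      (Icc 1 k ×ˢ Icc (k + 1) N).filter fun pq => s pq.1 < s pq.2 := by
  ext ⟨p, q⟩
  simp only [mem_filter, mem_product, mem_Icc]
  constructor
  · rintro ⟨⟨⟨hp1, hpN⟩, hq1, hqN⟩, hpq, hs⟩
    refine ⟨⟨⟨hp1, ?_⟩, ?_, hqN⟩, hs⟩
    · by_contra!
      exact (hr ⟨by omega, hpN⟩ ⟨by omega, hqN⟩ hpq).asymm hs
    · by_contra!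
      exact (hl ⟨hp1, by omega⟩ ⟨hq1, by omega⟩ hpq).asymm hs
  · rintro ⟨⟨⟨hp1, hpk⟩, hq1, hqN⟩, hs⟩
    exact ⟨⟨⟨hp1, by omega⟩, by omega, hqN⟩, by omega, hs⟩

lemma card_filter_product_eq_sum {α β : Type*} (A : Finset α) (B : Finset β)
    (r : α → β → Prop) [∀ a b, Decidable (r a b)] :
    ((A ×ˢ B).filter fun ab => r ab.1 ab.2).card = ∑ b ∈ B, (A.filter (r · b)).card := by
  simp only [card_filter, sum_product_right]

namespace YPartition

lemma le_len_of_ne_zero (p : YPartition) {m : ℕ} (h : p.f m ≠ 0) : m ≤ p.len := by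
  obtain ⟨N, hN⟩ := p.ev_zero
  refine le_csSup ⟨N, fun i hi => ?_⟩ h
  by_contra hc
  exact hi (hN i (by omega))

lemma size_eq_sum_Icc (p : YPartition) {n : ℕ} (hlen : p.len ≤ n) :
    p.size = ∑ m ∈ Icc 1 n, p.f m := by
  refine finsum_eq_finsetSum_of_support_subset p.f fun m hm => ?_
  have hm0 : m ≠ 0 := by rintro rfl; exact hm p.f_zero
  have := p.le_len_of_ne_zero hm
  simp only [coe_Icc, Set.mem_Icc]
  omega

lemma setOf_le_f_subset_Icc_len (p : YPartition) {j : ℕ} (hj : 1 ≤ j) :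
    {i | 1 ≤ i ∧ j ≤ p.f i} ⊆ Set.Icc 1 p.len :=
  fun _ ⟨hi, hji⟩ => ⟨hi, p.le_len_of_ne_zero (by omega)⟩

lemma conjFun_le_len (p : YPartition) {j : ℕ} (hj : 1 ≤ j) : conjFun p.f j ≤ p.len := by
  simpa [conjFun] using Set.ncard_le_ncard (p.setOf_le_f_subset_Icc_len hj) (Set.finite_Icc _ _)

lemma le_conjFun_iff (p : YPartition) {j m : ℕ} (hj : 1 ≤ j) (hm : 1 ≤ m) :
    m ≤ conjFun p.f j ↔ j ≤ p.f m := by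
  constructor
  · intro hle
    by_contra! hlt
    have hsub : {i | 1 ≤ i ∧ j ≤ p.f i} ⊆ Set.Icc 1 (m - 1) := fun i ⟨hi, hji⟩ =>
      ⟨hi, by by_contra; have := p.antitone hm (show m ≤ i by omega); omega⟩
    have := Set.ncard_le_ncard hsub (Set.finite_Icc _ _)
    simp only [Set.ncard_Icc_nat] at this
    unfold conjFun at hle
    omega
  · intro hjm
    have hsub : Set.Icc 1 m ⊆ {i | 1 ≤ i ∧ j ≤ p.f i} := fun i ⟨hi, him⟩ =>
      ⟨hi, hjm.trans (p.antitone hi him)⟩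
    simpa [conjFun] using
      Set.ncard_le_ncard hsub ((Set.finite_Icc _ _).subset (p.setOf_le_f_subset_Icc_len hj))

lemma conjFun_le_conjFun (p : YPartition) {j j' : ℕ} (hj : 1 ≤ j) (hjj' : j ≤ j') :
    conjFun p.f j' ≤ conjFun p.f j := by
  rcases Nat.eq_zero_or_pos (conjFun p.f j') with h | h
  · omega
  · rw [p.le_conjFun_iff hj h]
    exact hjj'.trans ((p.le_conjFun_iff (hj.trans hjj') h).mp le_rfl)

/-- The comparison `β_j < α_{n+1-m}` of the theorem. -/
lemma sub_conjFun_lt_iff (p : YPartition) {n j m : ℕ} (hlen : p.len ≤ n) (hj : 1 ≤ j)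
    (hm : 1 ≤ m) (hmn : m ≤ n) :
    n + j - conjFun p.f j < p.f m + (n + 1 - m) ↔ j ≤ p.f m := by
  have hconj := (p.conjFun_le_len hj).trans hlen
  have hdual := p.le_conjFun_iff hj hm
  constructor <;> intro h
  · by_contra! hlt
    have := mt hdual.mp (by omega)
    omega
  · have := hdual.mpr h
    omega

/-- The sequence `s` of the theorem, with `β_{k+1-p}` and `α_{n+k+1-p}` written out. -/
noncomputable def rectSeq (p : YPartition) (n k q : ℕ) : ℕ :=
  if q ≤ k then n + (k + 1 - q) - conjFun p.f (k + 1 - q) else p.f (q - k) + (n + k + 1 - q)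

section rectSeq

variable (p : YPartition) {n k : ℕ}

lemma rectSeq_of_le {q : ℕ} (hq : q ≤ k) :
    p.rectSeq n k q = n + (k + 1 - q) - conjFun p.f (k + 1 - q) :=
  if_pos hq

lemma rectSeq_of_lt {q : ℕ} (hq : k < q) :
    p.rectSeq n k q = p.f (q - k) + (n + k + 1 - q) :=
  if_neg (by omega)

lemma strictAntiOn_rectSeq_left (hlen : p.len ≤ n) :
    StrictAntiOn (p.rectSeq n k) (Set.Icc 1 k) := by
  rintro q ⟨hq, hqk⟩ q' ⟨hq', hq'k⟩ hqq'
  have hanti := p.conjFun_le_conjFun (show 1 ≤ k + 1 - q' by omega)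
    (show k + 1 - q' ≤ k + 1 - q by omega)
  have hconj := (p.conjFun_le_len (show 1 ≤ k + 1 - q' by omega)).trans hlen
  rw [p.rectSeq_of_le hqk, p.rectSeq_of_le hq'k]
  omega

lemma strictAntiOn_rectSeq_right : StrictAntiOn (p.rectSeq n k) (Set.Icc (k + 1) (n + k)) := by
  rintro q ⟨hq, hqn⟩ q' ⟨hq', hq'n⟩ hqq'
  have := p.antitone (show 1 ≤ q - k by omega) (show q - k ≤ q' - k by omega)
  rw [p.rectSeq_of_lt hq, p.rectSeq_of_lt hq']
  omega

lemma card_filter_rectSeq_lt (hlen : p.len ≤ n) (hwidth : p.f 1 ≤ k) {q : ℕ}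
    (hq : q ∈ Icc (k + 1) (n + k)) :
    ((Icc 1 k).filter (p.rectSeq n k · < p.rectSeq n k q)).card = p.f (q - k) := by
  rw [mem_Icc] at hq
  have hfk : p.f (q - k) ≤ k := (p.antitone le_rfl (show 1 ≤ q - k by omega)).trans hwidth
  have hlt_iff : ∀ r ∈ Icc 1 k,
      p.rectSeq n k r < p.rectSeq n k q ↔ k + 1 - p.f (q - k) ≤ r := by
    intro r hr
    rw [mem_Icc] at hr
    rw [p.rectSeq_of_le hr.2, p.rectSeq_of_lt hq.1, show n + k + 1 - q = n + 1 - (q - k) by omega,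
      p.sub_conjFun_lt_iff hlen (by omega) (by omega) (by omega)]
    omega
  rw [filter_congr hlt_iff, show (Icc 1 k).filter (k + 1 - p.f (q - k) ≤ ·) =
    Icc (k + 1 - p.f (q - k)) k by ext; simp only [mem_filter, mem_Icc]; omega, Nat.card_Icc]
  omega

lemma card_inversions_rectSeq (hlen : p.len ≤ n) (hwidth : p.f 1 ≤ k) :
    ((Icc 1 (n + k) ×ˢ Icc 1 (n + k)).filter fun pq =>
      pq.1 < pq.2 ∧ p.rectSeq n k pq.1 < p.rectSeq n k pq.2).card = p.size := by
  rw [filter_inversions_eq_of_strictAntiOn (p.strictAntiOn_rectSeq_left hlen)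
      p.strictAntiOn_rectSeq_right,
    card_filter_product_eq_sum (r := (p.rectSeq n k · < p.rectSeq n k ·)),
    sum_congr rfl fun q hq => p.card_filter_rectSeq_lt hlen hwidth hq, p.size_eq_sum_Icc hlen,
    show Icc (k + 1) (n + k) = (Icc 1 n).map (addRightEmbedding k) by simp [add_comm], sum_map]
  simp

end rectSeq

end YPartition

open YPartition in
/-- For a partition `λ` fitting in an `n × k` rectangle, the number of
inversions of the sequence `s = (β_k, …, β_1, α_n, …, α_1)` equals `|λ|`. -/
theorem statement1 (n k : ℕ) (lam : YPartition) (hlen : lam.len ≤ n) (hwidth : lam.f 1 ≤ k)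
    (α : ℕ → ℕ) (β : ℕ → ℕ) (s : ℕ → ℕ)
    (hα : ∀ i, α i = lam.f (n + 1 - i) + i)
    (hβ : ∀ j, β j = n + j - conjFun lam.f j)
    (hs : ∀ p, 1 ≤ p → p ≤ n + k → s p = if p ≤ k then β (k + 1 - p) else α (n + k + 1 - p)) :
    (((Finset.Icc 1 (n + k)) ×ˢ (Finset.Icc 1 (n + k))).filter
        (fun pq => pq.1 < pq.2 ∧ s pq.1 < s pq.2)).card = lam.size := by
  have hs_eq : ∀ p ∈ Icc 1 (n + k), s p = lam.rectSeq n k p := by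
    intro p hp
    rw [mem_Icc] at hp
    rw [hs p hp.1 hp.2, rectSeq]
    split_ifs
    · rw [hβ]
    · rw [hα, show n + 1 - (n + k + 1 - p) = p - k by omega]
  rw [← lam.card_inversions_rectSeq hlen hwidth]
  congr 1
  refine filter_congr fun pq hpq => ?_
  rw [mem_product] at hpq
  rw [hs_eq _ hpq.1, hs_eq _ hpq.2]
end

section
/- Let n ≥ 0 and let μ, ν, λ be partitions with ℓ(μ) > n and ℓ(ν) > n such that μ/ν is a border strip of size 2(ℓ(μ)−n−1) containing the box (ℓ(μ), 1), and ν/λ is a border strip of size 2(ℓ(ν)−n−1) containing the box (ℓ(ν), 1). Then c(μ/ν) > c(ν/λ). -/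
/-!
Let `r` be the top row of a border strip `μ/ν` that contains the box `(ℓ(μ), 1)`. Connectivity
forces the strip to meet every row from `r` to `ℓ(μ)` and, together with the absence of 2×2
squares, consecutive rows to overlap in exactly one column: `ν_i + 1 = μ_{i+1}`. Hence the strip
has `μ_r` columns and `μ_r + ℓ(μ) - r` boxes. Let `r'` be the top row of `ν/λ`. If `r ≤ r'`,
row `r'` meets `μ/ν`, so `c(ν/λ) = ν_{r'} < μ_{r'} ≤ μ_r = c(μ/ν)`. If `r' < r`, the prescribed
sizes give `c = ℓ + (top row) - 2n - 2` for both strips, and `ℓ(ν) < ℓ(μ)`.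
-/

/-- A partition: a weakly decreasing sequence of nonnegative integers, indexed starting at 1
(`f 0 = 0` by convention), with finitely many nonzero terms. `f i` is the part `λ_i`. -/
structure Partition' where
  f : ℕ → ℕ
  f_zero : f 0 = 0
  antitone : ∀ ⦃i j : ℕ⦄, 1 ≤ i → i ≤ j → f j ≤ f i
  ev_zero : ∃ N, ∀ i, N ≤ i → f i = 0

namespace Partition'

/-- The number of nonzero parts `ℓ(λ)`. -/
noncomputable def len (p : Partition') : ℕ := sSup {i | p.f i ≠ 0}

/-- The size `|λ| = Σ_i λ_i`. -/
noncomputable def size (p : Partition') : ℕ := ∑ᶠ i, p.f i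

/-- The transpose (conjugate): `g† j = #{i ≥ 1 : g i ≥ j}`. -/
noncomputable def conjFun (g : ℕ → ℕ) (j : ℕ) : ℕ := Set.ncard {i | 1 ≤ i ∧ j ≤ g i}

/-- Containment of partitions: `ν ⊆ μ`. -/
def Sub (ν μ : Partition') : Prop := ∀ i, ν.f i ≤ μ.f i

/-- The cells (boxes) of the skew diagram `μ/ν`: pairs `(i,j)` with `i ≥ 1` and
`ν_i < j ≤ μ_i`. -/
def cells (μ ν : Partition') : Set (ℕ × ℕ) :=
  {c | 1 ≤ c.1 ∧ ν.f c.1 < c.2 ∧ c.2 ≤ μ.f c.1}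

/-- Two boxes share an edge. -/
def Adj (a b : ℕ × ℕ) : Prop :=
  (a.1 = b.1 ∧ (a.2 + 1 = b.2 ∨ b.2 + 1 = a.2)) ∨
  (a.2 = b.2 ∧ (a.1 + 1 = b.1 ∨ b.1 + 1 = a.1))

/-- A set of boxes is connected if any two of its boxes are joined by a chain of its
boxes, each sharing an edge with the next. -/
def IsConnected (s : Set (ℕ × ℕ)) : Prop :=
  ∀ a ∈ s, ∀ b ∈ s, Relation.ReflTransGen (fun x y => x ∈ s ∧ y ∈ s ∧ Adj x y) a b

/-- `μ/ν` is a border strip: `ν ⊆ μ`, and the skew diagram is nonempty, connected,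
and contains no 2×2 square. -/
def IsBorderStrip (μ ν : Partition') : Prop :=
  Sub ν μ ∧ (cells μ ν).Nonempty ∧ IsConnected (cells μ ν) ∧
    ¬ ∃ i j : ℕ, (i, j) ∈ cells μ ν ∧ (i + 1, j) ∈ cells μ ν ∧
      (i, j + 1) ∈ cells μ ν ∧ (i + 1, j + 1) ∈ cells μ ν

/-- The number of boxes of `μ/ν`. -/
noncomputable def stripSize (μ ν : Partition') : ℕ := (cells μ ν).ncard

/-- The number of rows that `μ/ν` occupies. -/
noncomputable def rows (μ ν : Partition') : ℕ := (Prod.fst '' cells μ ν).ncard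

/-- The number of columns that `μ/ν` occupies. -/
noncomputable def cols (μ ν : Partition') : ℕ := (Prod.snd '' cells μ ν).ncard

/-- The graph of the symplectic modification rule: `ModRule n μ i τ` holds iff
`i_{2n}(μ) = i < ∞` and `τ_{2n}(μ) = τ`. -/
inductive ModRule (n : ℕ) : Partition' → ℕ → Partition' → Prop
  | base (μ : Partition') (h : μ.len ≤ n) : ModRule n μ 0 μ
  | step (μ ν τ : Partition') (i : ℕ)
      (hlen : n < μ.len)
      (hbs : IsBorderStrip μ ν)
      (hsize : stripSize μ ν = 2 * (μ.len - n - 1))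
      (hbox : (μ.len, 1) ∈ cells μ ν)
      (hrec : ModRule n ν i τ) :
      ModRule n μ (cols μ ν + i) τ

/-- `i_{2n}(μ) ∈ ℕ∞`; it is `⊤ = ∞` exactly when the modification rule fails. -/
noncomputable def i2 (n : ℕ) (μ : Partition') : ℕ∞ :=
  sInf {c | ∃ i τ, ModRule n μ i τ ∧ c = (i : ℕ∞)}

-- `τ_{2n}(μ)`, defined (arbitrarily, as `μ` itself) when `i_{2n}(μ) = ∞`.
open Classical in
noncomputable def tau (n : ℕ) (μ : Partition') : Partition' :=
  if h : ∃ it : ℕ × Partition', ModRule n μ it.1 it.2 then h.choose.2 else μ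

end Partition'

theorem Relation.ReflTransGen.exists_rel_of_not {α : Type*} {r : α → α → Prop} {P : α → Prop}
    {a b : α} (h : Relation.ReflTransGen r a b) (ha : P a) (hb : ¬ P b) :
    ∃ x y, r x y ∧ P x ∧ ¬ P y := by
  induction h with
  | refl => exact absurd ha hb
  | @tail c d _ hcd ih =>
    by_cases hc : P c
    · exact ⟨c, d, hcd, hc, hb⟩
    · exact ih hc

theorem sum_range_tsub_add_eq {f g : ℕ → ℕ} (hgf : ∀ i, g i ≤ f i) {r : ℕ} :
    ∀ d, (∀ i < d, g (r + i) + 1 = f (r + i + 1)) →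
      ∑ i ∈ Finset.range (d + 1), (f (r + i) - g (r + i)) + g (r + d) = f r + d
  | 0, _ => by simp [Nat.sub_add_cancel (hgf r)]
  | d + 1, h => by
    have ih := sum_range_tsub_add_eq hgf d fun i hi => h i (by omega)
    have hd := h d (by omega)
    have hle := hgf (r + d + 1)
    rw [Finset.sum_range_succ, ← Nat.add_assoc r d 1]
    omega

namespace Partition'

variable {μ ν : Partition'}

lemma bddAbove_support (p : Partition') : BddAbove {i | p.f i ≠ 0} := by
  obtain ⟨N, hN⟩ := p.ev_zero
  exact ⟨N, fun i hi => by_contra fun h => hi (hN i (le_of_not_ge h))⟩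

lemma f_eq_zero_of_len_lt (p : Partition') {i : ℕ} (h : p.len < i) : p.f i = 0 := by
  by_contra hne
  exact absurd (le_csSup p.bddAbove_support hne) (not_le.mpr h)

lemma len_lt_of_f_eq_zero (p : Partition') {i : ℕ} (hi : 1 ≤ i) (h : p.f i = 0) : p.len < i := by
  by_contra! hle
  have hne : {i | p.f i ≠ 0}.Nonempty := by
    by_contra hempty
    rw [Set.not_nonempty_iff_eq_empty] at hempty
    have : p.len = 0 := by simp [len, hempty]
    omega
  have hlen : p.f p.len ≠ 0 := Nat.sSup_mem hne p.bddAbove_support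
  have := p.antitone hi hle
  omega

lemma mem_cells {i j : ℕ} :
    (i, j) ∈ cells μ ν ↔ 1 ≤ i ∧ ν.f i < j ∧ j ≤ μ.f i := Iff.rfl

lemma fst_le_len_of_mem_cells {c : ℕ × ℕ} (hc : c ∈ cells μ ν) :
    c.1 ≤ μ.len := by
  by_contra! h
  have := μ.f_eq_zero_of_len_lt h
  obtain ⟨-, hν, hμ⟩ := hc
  omega

lemma len_lt_len_of_mem_cells (hbox : (μ.len, 1) ∈ cells μ ν) : ν.len < μ.len :=
  ν.len_lt_of_f_eq_zero hbox.1 (by have := (mem_cells.mp hbox).2.1; omega)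

lemma adj_fst_le {x y : ℕ × ℕ} (h : Adj x y) : y.1 ≤ x.1 + 1 := by
  rcases h with ⟨h, -⟩ | ⟨-, h⟩ <;> omega

lemma adj_snd_le {x y : ℕ × ℕ} (h : Adj x y) : y.2 ≤ x.2 + 1 := by
  rcases h with ⟨-, h⟩ | ⟨h, -⟩ <;> omega

lemma IsConnected.exists_mem_eq {s : Set (ℕ × ℕ)} (hs : IsConnected s) {g : ℕ × ℕ → ℕ}
    (hg : ∀ x y, Adj x y → g y ≤ g x + 1) {a b : ℕ × ℕ} (ha : a ∈ s) (hb : b ∈ s) {k : ℕ}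
    (hak : g a ≤ k) (hkb : k ≤ g b) : ∃ c ∈ s, g c = k := by
  rcases hak.eq_or_lt with hak | hak
  · exact ⟨a, ha, hak⟩
  obtain ⟨x, y, ⟨-, hy, hxy⟩, hx, hy'⟩ :=
    (hs a ha b hb).exists_rel_of_not (P := fun c => g c < k) hak (by omega)
  exact ⟨y, hy, by have := hg x y hxy; omega⟩

lemma IsConnected.lt_f_succ (hconn : IsConnected (cells μ ν)) {a b : ℕ × ℕ}
    (ha : a ∈ cells μ ν) (hb : b ∈ cells μ ν) {i : ℕ} (hai : a.1 ≤ i) (hib : i < b.1) :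
    ν.f i < μ.f (i + 1) := by
  obtain ⟨⟨x₁, x₂⟩, ⟨y₁, y₂⟩, ⟨⟨-, hνx, -⟩, ⟨-, -, hμy⟩, hxy⟩, hxi, hyi⟩ :=
    (hconn a ha b hb).exists_rel_of_not (P := fun c => c.1 ≤ i) hai (by omega)
  dsimp only at hνx hμy hxi hyi
  -- the chain leaves the rows `≤ i` through a vertical edge from row `i` to row `i + 1`
  obtain ⟨rfl, rfl, rfl⟩ : x₂ = y₂ ∧ x₁ = i ∧ y₁ = i + 1 := by
    rcases hxy with ⟨h, -⟩ | ⟨h₂, h₁⟩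
    · dsimp only at h; omega
    · dsimp only at h₁ h₂; omega
  omega

lemma IsBorderStrip.f_succ_le (hbs : IsBorderStrip μ ν) {i : ℕ} (hi : 1 ≤ i) :
    μ.f (i + 1) ≤ ν.f i + 1 := by
  by_contra! h
  have hμ := μ.antitone hi (i.le_add_right 1)
  have hν := ν.antitone hi (i.le_add_right 1)
  exact hbs.2.2.2 ⟨i, ν.f i + 1, mem_cells.mpr ⟨hi, by omega, by omega⟩,
    mem_cells.mpr ⟨by omega, by omega, by omega⟩, mem_cells.mpr ⟨hi, by omega, by omega⟩,
    mem_cells.mpr ⟨by omega, by omega, by omega⟩⟩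

lemma stripSize_eq_sum {S : Finset ℕ} (hS : ∀ c ∈ cells μ ν, c.1 ∈ S) :
    stripSize μ ν = ∑ i ∈ S, (μ.f i - ν.f i) := by
  have hcells : cells μ ν =
      ↑(S.biUnion fun i => (Finset.Ioc (ν.f i) (μ.f i)).image (Prod.mk i)) := by
    ext ⟨i, j⟩
    simp only [Finset.coe_biUnion, Finset.coe_image, Finset.coe_Ioc, Set.mem_iUnion,
      Set.mem_image, Set.mem_Ioc, Prod.mk.injEq, exists_eq_right_right, Finset.mem_coe]
    constructor
    · intro hc
      exact ⟨i, hS _ hc, hc.2, rfl⟩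
    · rintro ⟨i, -, hj, rfl⟩
      refine mem_cells.mpr ⟨Nat.one_le_iff_ne_zero.mpr fun h => ?_, hj⟩
      have := μ.f_zero
      subst h
      omega
  rw [stripSize, hcells, Set.ncard_coe_finset, Finset.card_biUnion]
  · simp [Finset.card_image_of_injective _ (Prod.mk_right_injective _)]
  · intro i _ i' _ hii'
    simp only [Function.onFun, Finset.disjoint_left, Finset.mem_image]
    rintro _ ⟨j, -, rfl⟩ ⟨j', -, h⟩
    exact hii' (Prod.mk.inj h).1.symm

noncomputable def topRow (μ ν : Partition') : ℕ := sInf (Prod.fst '' cells μ ν)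

lemma topRow_le {c : ℕ × ℕ} (hc : c ∈ cells μ ν) : topRow μ ν ≤ c.1 :=
  Nat.sInf_le ⟨c, hc, rfl⟩

lemma exists_mem_cells_fst_eq_topRow (h : (cells μ ν).Nonempty) :
    ∃ c ∈ cells μ ν, c.1 = topRow μ ν :=
  Nat.sInf_mem (h.image _)

lemma one_le_topRow (hbox : (μ.len, 1) ∈ cells μ ν) : 1 ≤ topRow μ ν := by
  obtain ⟨c, hc, hcr⟩ := exists_mem_cells_fst_eq_topRow ⟨_, hbox⟩
  exact hcr ▸ hc.1

lemma IsBorderStrip.lt_f_of_topRow_le (hbs : IsBorderStrip μ ν)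
    (hbox : (μ.len, 1) ∈ cells μ ν) {k : ℕ} (hrk : topRow μ ν ≤ k) (hkL : k ≤ μ.len) :
    ν.f k < μ.f k := by
  obtain ⟨c₀, hc₀, hc₀r⟩ := exists_mem_cells_fst_eq_topRow hbs.2.1
  obtain ⟨⟨i, j⟩, hc, rfl⟩ := hbs.2.2.1.exists_mem_eq (fun _ _ => adj_fst_le) hc₀ hbox
    (hc₀r ▸ hrk) hkL
  obtain ⟨-, hν, hμ⟩ := hc
  exact hν.trans_le hμ

lemma IsBorderStrip.f_succ_eq (hbs : IsBorderStrip μ ν) (hbox : (μ.len, 1) ∈ cells μ ν)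
    {i : ℕ} (hri : topRow μ ν ≤ i) (hiL : i < μ.len) : ν.f i + 1 = μ.f (i + 1) := by
  have hi := hbs.lt_f_of_topRow_le hbox hri hiL.le
  have hlt := hbs.2.2.1.lt_f_succ (mem_cells.mpr ⟨(one_le_topRow hbox).trans hri, hi, le_rfl⟩)
    hbox (i := i) le_rfl hiL
  have hle := hbs.f_succ_le ((one_le_topRow hbox).trans hri)
  omega

lemma IsBorderStrip.cols_eq (hbs : IsBorderStrip μ ν) (hbox : (μ.len, 1) ∈ cells μ ν) :
    cols μ ν = μ.f (topRow μ ν) := by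
  have hr := one_le_topRow hbox
  have hcolumns : Prod.snd '' cells μ ν = Set.Icc 1 (μ.f (topRow μ ν)) := by
    ext j
    constructor
    · rintro ⟨⟨i, j⟩, hc, rfl⟩
      have hμ := μ.antitone hr (topRow_le hc)
      obtain ⟨-, hν, hj⟩ := hc
      exact ⟨by omega, by omega⟩
    · rintro ⟨hj₁, hj₂⟩
      have htop := mem_cells.mpr ⟨hr, hbs.lt_f_of_topRow_le hbox le_rfl
        (topRow_le hbox), le_rfl⟩
      exact hbs.2.2.1.exists_mem_eq (fun _ _ => adj_snd_le) hbox htop hj₁ hj₂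
  rw [cols, hcolumns, ← Finset.coe_Icc, Set.ncard_coe_finset, Nat.card_Icc, Nat.add_sub_cancel]

lemma IsBorderStrip.stripSize_eq (hbs : IsBorderStrip μ ν) (hbox : (μ.len, 1) ∈ cells μ ν) :
    stripSize μ ν = μ.f (topRow μ ν) + (μ.len - topRow μ ν) := by
  set r := topRow μ ν
  set L := μ.len
  have hrL : r ≤ L := topRow_le hbox
  have hrows : ∀ c ∈ cells μ ν, c.1 ∈ Finset.Ico r (L + 1) := fun c hc =>
    Finset.mem_Ico.mpr ⟨topRow_le hc, Nat.lt_succ_of_le (fst_le_len_of_mem_cells hc)⟩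
  have hνL : ν.f L = 0 := by have := (mem_cells.mp hbox).2.1; omega
  have htele := sum_range_tsub_add_eq hbs.1 (L - r) fun i hi =>
    hbs.f_succ_eq hbox (Nat.le_add_right r i) (by omega)
  rw [Nat.add_sub_cancel' hrL, hνL, add_zero] at htele
  rwa [stripSize_eq_sum hrows, Finset.sum_Ico_eq_sum_range, Nat.sub_add_comm hrL]

end Partition'

open Partition' in
theorem statement2_general (n : ℕ) (μ ν lam : Partition')
    (hbs1 : IsBorderStrip μ ν)
    (hsize1 : stripSize μ ν = 2 * (μ.len - n - 1))
    (hbox1 : (μ.len, 1) ∈ cells μ ν)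
    (hbs2 : IsBorderStrip ν lam)
    (hsize2 : stripSize ν lam = 2 * (ν.len - n - 1))
    (hbox2 : (ν.len, 1) ∈ cells ν lam) :
    cols ν lam < cols μ ν := by
  have hlen := len_lt_len_of_mem_cells hbox1
  have hr₁ := one_le_topRow hbox1
  have hr₂ := topRow_le hbox2
  have htop₁ := hbs1.lt_f_of_topRow_le hbox1 le_rfl (topRow_le hbox1)
  rw [hbs1.stripSize_eq hbox1] at hsize1
  rw [hbs2.stripSize_eq hbox2] at hsize2
  rw [hbs1.cols_eq hbox1, hbs2.cols_eq hbox2]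
  rcases le_or_gt (topRow μ ν) (topRow ν lam) with hle | hlt
  · calc ν.f (topRow ν lam) < μ.f (topRow ν lam) :=
          hbs1.lt_f_of_topRow_le hbox1 hle (by omega)
      _ ≤ μ.f (topRow μ ν) := μ.antitone hr₁ hle
  · omega

open Partition' in
/-- If `μ/ν` and `ν/λ` are successive border strips removed by the
symplectic modification rule, then the number of columns strictly decreases. -/
theorem statement2 (n : ℕ) (μ ν lam : Partition')
    (hμ : n < μ.len) (hν : n < ν.len)
    (hbs1 : IsBorderStrip μ ν)
    (hsize1 : stripSize μ ν = 2 * (μ.len - n - 1))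
    (hbox1 : (μ.len, 1) ∈ cells μ ν)
    (hbs2 : IsBorderStrip ν lam)
    (hsize2 : stripSize ν lam = 2 * (ν.len - n - 1))
    (hbox2 : (ν.len, 1) ∈ cells ν lam) :
    cols ν lam < cols μ ν :=
  statement2_general n μ ν lam hbs1 hsize1 hbox1 hbs2 hsize2 hbox2
end

section
/- Let n ≥ 0 and let μ be a partition with ℓ(μ) > n + 1. Suppose ν ⊆ μ is a partition such that μ/ν is a border strip of size 2(ℓ(μ)−n−1) containing the box (ℓ(μ), 1), and let c = c(μ/ν) be the number of columns that μ/ν occupies. Then the transpose partitions satisfy: ν†_i = μ†_{i+1} − 1 for 1 ≤ i < c; ν†_c = 2n + 1 + c − ℓ(μ); and ν†_i = μ†_i for i > c. -/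
/-- A partition: a weakly decreasing sequence of nonnegative integers, indexed starting at 1
(`f 0 = 0` by convention), with finitely many nonzero terms. `f i` is the part `λ_i`. -/
structure SeqPartition where
  f : ℕ → ℕ
  f_zero : f 0 = 0
  antitone : ∀ ⦃i j : ℕ⦄, 1 ≤ i → i ≤ j → f j ≤ f i
  ev_zero : ∃ N, ∀ i, N ≤ i → f i = 0

namespace SeqPartition

/-- The number of nonzero parts `ℓ(λ)`. -/
noncomputable def len (p : SeqPartition) : ℕ := sSup {i | p.f i ≠ 0}

/-- The size `|λ| = Σ_i λ_i`. -/
noncomputable def size (p : SeqPartition) : ℕ := ∑ᶠ i, p.f i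

/-- The transpose (conjugate): `g† j = #{i ≥ 1 : g i ≥ j}`. -/
noncomputable def conjFun (g : ℕ → ℕ) (j : ℕ) : ℕ := Set.ncard {i | 1 ≤ i ∧ j ≤ g i}

/-- Containment of partitions: `ν ⊆ μ`. -/
def Sub (ν μ : SeqPartition) : Prop := ∀ i, ν.f i ≤ μ.f i

/-- The cells (boxes) of the skew diagram `μ/ν`: pairs `(i,j)` with `i ≥ 1` and
`ν_i < j ≤ μ_i`. -/
def cells (μ ν : SeqPartition) : Set (ℕ × ℕ) :=
  {c | 1 ≤ c.1 ∧ ν.f c.1 < c.2 ∧ c.2 ≤ μ.f c.1}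

/-- Two boxes share an edge. -/
def Adj (a b : ℕ × ℕ) : Prop :=
  (a.1 = b.1 ∧ (a.2 + 1 = b.2 ∨ b.2 + 1 = a.2)) ∨
  (a.2 = b.2 ∧ (a.1 + 1 = b.1 ∨ b.1 + 1 = a.1))

/-- A set of boxes is connected if any two of its boxes are joined by a chain of its
boxes, each sharing an edge with the next. -/
def IsConnected (s : Set (ℕ × ℕ)) : Prop :=
  ∀ a ∈ s, ∀ b ∈ s, Relation.ReflTransGen (fun x y => x ∈ s ∧ y ∈ s ∧ Adj x y) a b

/-- `μ/ν` is a border strip: `ν ⊆ μ`, and the skew diagram is nonempty, connected,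
and contains no 2×2 square. -/
def IsBorderStrip (μ ν : SeqPartition) : Prop :=
  Sub ν μ ∧ (cells μ ν).Nonempty ∧ IsConnected (cells μ ν) ∧
    ¬ ∃ i j : ℕ, (i, j) ∈ cells μ ν ∧ (i + 1, j) ∈ cells μ ν ∧
      (i, j + 1) ∈ cells μ ν ∧ (i + 1, j + 1) ∈ cells μ ν

/-- The number of boxes of `μ/ν`. -/
noncomputable def stripSize (μ ν : SeqPartition) : ℕ := (cells μ ν).ncard

/-- The number of rows that `μ/ν` occupies. -/
noncomputable def rows (μ ν : SeqPartition) : ℕ := (Prod.fst '' cells μ ν).ncard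

/-- The number of columns that `μ/ν` occupies. -/
noncomputable def cols (μ ν : SeqPartition) : ℕ := (Prod.snd '' cells μ ν).ncard

/-- The graph of the symplectic modification rule: `ModRule n μ i τ` holds iff
`i_{2n}(μ) = i < ∞` and `τ_{2n}(μ) = τ`. -/
inductive ModRule (n : ℕ) : SeqPartition → ℕ → SeqPartition → Prop
  | base (μ : SeqPartition) (h : μ.len ≤ n) : ModRule n μ 0 μ
  | step (μ ν τ : SeqPartition) (i : ℕ)
      (hlen : n < μ.len)
      (hbs : IsBorderStrip μ ν)
      (hsize : stripSize μ ν = 2 * (μ.len - n - 1))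
      (hbox : (μ.len, 1) ∈ cells μ ν)
      (hrec : ModRule n ν i τ) :
      ModRule n μ (cols μ ν + i) τ

/-- `i_{2n}(μ) ∈ ℕ∞`; it is `⊤ = ∞` exactly when the modification rule fails. -/
noncomputable def i2 (n : ℕ) (μ : SeqPartition) : ℕ∞ :=
  sInf {c | ∃ i τ, ModRule n μ i τ ∧ c = (i : ℕ∞)}

-- `τ_{2n}(μ)`, defined (arbitrarily, as `μ` itself) when `i_{2n}(μ) = ∞`.
open Classical in
noncomputable def tau (n : ℕ) (μ : SeqPartition) : SeqPartition :=
  if h : ∃ it : ℕ × SeqPartition, ModRule n μ it.1 it.2 then h.choose.2 else μ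

end SeqPartition

/-!
Let `a` be the top row of the strip and `ℓ = ℓ(μ)`. Connectedness makes the strip occupy exactly
the rows `a, …, ℓ`, and since it contains no 2×2 square, consecutive rows overlap in exactly one
column: `ν_k + 1 = μ_{k+1}` for `a ≤ k < ℓ`, while `ν_ℓ = 0` and `ν_k = μ_k` in all other rows.
Hence the strip occupies the columns `1, …, μ_a`, so `c = μ_a`, and it has `μ_a + ℓ - a` boxes,
which the size hypothesis turns into `a - 1 = 2n + 1 + c - ℓ`. The columns of `ν` are then read
off from these row relations.
-/

namespace SeqPartition

lemma mem_cells {μ ν : SeqPartition} {i j : ℕ} :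
    (i, j) ∈ cells μ ν ↔ 1 ≤ i ∧ ν.f i < j ∧ j ≤ μ.f i := Iff.rfl

lemma f_eq_zero_of_len_lt (p : SeqPartition) {k : ℕ} (hk : p.len < k) : p.f k = 0 := by
  obtain ⟨N, hN⟩ := p.ev_zero
  have hbdd : BddAbove {i | p.f i ≠ 0} :=
    ⟨N, fun i hi => by_contra fun hiN => hi (hN i (by omega))⟩
  by_contra h
  exact absurd (le_csSup hbdd h) (not_le.mpr hk)

lemma conjFun_eq_of_forall_iff {g : ℕ → ℕ} {j m : ℕ} (h : ∀ k, 1 ≤ k → (j ≤ g k ↔ k ≤ m)) :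
    conjFun g j = m := by
  have hS : {i | 1 ≤ i ∧ j ≤ g i} = Set.Icc 1 m := by
    ext k
    simp only [Set.mem_Icc]
    exact ⟨fun ⟨hk, hjk⟩ => ⟨hk, (h k hk).1 hjk⟩, fun ⟨hk, hkm⟩ => ⟨hk, (h k hk).2 hkm⟩⟩
  rw [conjFun, hS, Set.ncard_Icc_nat]
  omega

lemma le_f_iff_le_conjFun (p : SeqPartition) {j k : ℕ} (hj : 1 ≤ j) (hk : 1 ≤ k) :
    j ≤ p.f k ↔ k ≤ conjFun p.f j := by
  set S := {i | 1 ≤ i ∧ j ≤ p.f i}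
  have hbdd : BddAbove S := by
    obtain ⟨N, hN⟩ := p.ev_zero
    refine ⟨N, fun i hi => by_contra fun hiN => ?_⟩
    have := hN i (by omega)
    have := hi.2
    omega
  have hiff : ∀ i, 1 ≤ i → (j ≤ p.f i ↔ i ≤ sSup S) := by
    refine fun i hi => ⟨fun hji => le_csSup hbdd ⟨hi, hji⟩, fun his => ?_⟩
    rcases S.eq_empty_or_nonempty with hemp | hne
    · rw [hemp, csSup_empty, bot_eq_zero] at his
      omega
    · exact (Nat.sSup_mem hne hbdd).2.trans (p.antitone hi his)
  rw [conjFun_eq_of_forall_iff hiff]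
  exact hiff k hk

lemma IsConnected.exists_vertical_pair {s : Set (ℕ × ℕ)} (hs : IsConnected s) {p q : ℕ × ℕ}
    (hp : p ∈ s) (hq : q ∈ s) {k : ℕ} (hpk : k + 1 ≤ p.1) (hqk : q.1 ≤ k) :
    ∃ j, (k + 1, j) ∈ s ∧ (k, j) ∈ s := by
  induction hs p hp q hq with
  | refl => omega
  | @tail b c _ hbc ih =>
    obtain ⟨hb, hc, hadj⟩ := hbc
    by_cases hbk : b.1 ≤ k
    · exact ih hb hbk
    · rcases b with ⟨b1, b2⟩
      rcases c with ⟨c1, c2⟩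
      rcases hadj with ⟨hrow, -⟩ | ⟨hcol, hrows⟩
      · dsimp only at *
        omega
      · dsimp only at *
        obtain ⟨rfl, rfl⟩ : b1 = k + 1 ∧ c1 = k := by omega
        exact ⟨b2, hb, hcol ▸ hc⟩

lemma IsConnected.exists_mem_of_fst_le_of_le_fst {s : Set (ℕ × ℕ)} (hs : IsConnected s)
    {p q : ℕ × ℕ} (hp : p ∈ s) (hq : q ∈ s) {k : ℕ} (hpk : p.1 ≤ k) (hkq : k ≤ q.1) :
    ∃ j, (k, j) ∈ s := by
  rcases hkq.eq_or_lt with rfl | hlt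
  · exact ⟨q.2, hq⟩
  · obtain ⟨j, -, hj⟩ := hs.exists_vertical_pair hq hp hlt hpk
    exact ⟨j, hj⟩

lemma IsBorderStrip.f_add_one_eq {μ ν : SeqPartition} (h : IsBorderStrip μ ν) {k j j' : ℕ}
    (hk : (k, j) ∈ cells μ ν) (hk' : (k + 1, j') ∈ cells μ ν) : ν.f k + 1 = μ.f (k + 1) := by
  obtain ⟨-, -, hconn, hsq⟩ := h
  obtain ⟨i, hi', hi⟩ := hconn.exists_vertical_pair hk' hk le_rfl le_rfl
  obtain ⟨-, -, hiμ⟩ := mem_cells.1 hi'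
  obtain ⟨hk1, hνi, -⟩ := mem_cells.1 hi
  have := μ.antitone hk1 (Nat.le_add_right k 1)
  have := ν.antitone hk1 (Nat.le_add_right k 1)
  by_contra hne
  refine hsq ⟨k, ν.f k + 1, ?_, ?_, ?_, ?_⟩ <;> simp only [mem_cells] <;> omega

lemma fst_le_len_of_mem_cells {μ ν : SeqPartition} {i j : ℕ} (h : (i, j) ∈ cells μ ν) :
    i ≤ μ.len := by
  obtain ⟨-, hν, hμ⟩ := mem_cells.1 h
  by_contra hi
  have := μ.f_eq_zero_of_len_lt (not_le.mp hi)
  omega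

lemma stripSize_eq_sum {μ ν : SeqPartition} {a b : ℕ} (ha : 1 ≤ a)
    (hrows : ∀ i j, (i, j) ∈ cells μ ν → a ≤ i ∧ i ≤ b) :
    stripSize μ ν = ∑ i ∈ Finset.Icc a b, (μ.f i - ν.f i) := by
  have hcells : cells μ ν = ↑((Finset.Icc a b).biUnion
      fun i => ({i} : Finset ℕ) ×ˢ Finset.Ioc (ν.f i) (μ.f i)) := by
    ext ⟨i, j⟩
    simp only [Finset.coe_biUnion, Finset.coe_Icc, Finset.coe_product, Finset.coe_singleton,
      Finset.coe_Ioc, Set.mem_iUnion, Set.mem_prod, Set.mem_singleton_iff, Set.mem_Ioc,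
      Set.mem_Icc, exists_prop]
    constructor
    · intro h
      exact ⟨i, hrows i j h, rfl, h.2⟩
    · rintro ⟨i, hi, rfl, hj⟩
      exact ⟨by omega, hj⟩
  rw [stripSize, hcells, Set.ncard_coe_finset, Finset.card_biUnion]
  · simp only [Finset.card_product, Finset.card_singleton, one_mul, Nat.card_Ioc]
  · intro x _ y _ hxy
    simp only [Function.onFun, Finset.disjoint_left, Finset.mem_product, Finset.mem_singleton]
    rintro p ⟨rfl, -⟩ ⟨h, -⟩
    exact hxy h

lemma sum_Icc_tsub_eq_of_add_one_eq {f g : ℕ → ℕ} {a b : ℕ} (hab : a ≤ b)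
    (hstep : ∀ k, a ≤ k → k < b → g k + 1 = f (k + 1))
    (hf : ∀ k, a ≤ k → k < b → f (k + 1) ≤ f k) (hb : g b = 0) :
    ∑ i ∈ Finset.Icc a b, (f i - g i) = f a + (b - a) := by
  induction hab using Nat.decreasingInduction with
  | self => simp [hb]
  | of_succ k hkb ih =>
    rw [← Finset.insert_Icc_add_one_left_eq_Icc hkb.le, Finset.sum_insert (by simp),
      ih (fun i hi => hstep i (by omega)) (fun i hi => hf i (by omega))]
    have := hstep k le_rfl hkb
    have := hf k le_rfl hkb
    omega

-- `0` when `μ/ν` is empty.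
noncomputable def topRow (μ ν : SeqPartition) : ℕ := sInf (Prod.fst '' cells μ ν)

section TopRow

variable {μ ν : SeqPartition}

lemma topRow_le {i j : ℕ} (h : (i, j) ∈ cells μ ν) : topRow μ ν ≤ i :=
  Nat.sInf_le ⟨_, h, rfl⟩

lemma exists_mem_cells_topRow (h : (cells μ ν).Nonempty) : ∃ j, (topRow μ ν, j) ∈ cells μ ν := by
  obtain ⟨⟨i, j⟩, hij, hi⟩ := Nat.sInf_mem (h.image Prod.fst)
  exact ⟨j, by rw [topRow, ← hi]; exact hij⟩

lemma one_le_topRow (hbox : (μ.len, 1) ∈ cells μ ν) : 1 ≤ topRow μ ν := by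
  obtain ⟨j, hj⟩ := exists_mem_cells_topRow ⟨_, hbox⟩
  exact (mem_cells.1 hj).1

lemma topRow_le_len (hbox : (μ.len, 1) ∈ cells μ ν) : topRow μ ν ≤ μ.len :=
  topRow_le hbox

lemma one_le_f_topRow (hbox : (μ.len, 1) ∈ cells μ ν) : 1 ≤ μ.f (topRow μ ν) :=
  (mem_cells.1 hbox).2.2.trans (μ.antitone (one_le_topRow hbox) (topRow_le_len hbox))

lemma exists_mem_cells_of_topRow_le (hbs : IsBorderStrip μ ν) (hbox : (μ.len, 1) ∈ cells μ ν)
    {k : ℕ} (h1 : topRow μ ν ≤ k) (h2 : k ≤ μ.len) : ∃ j, (k, j) ∈ cells μ ν := by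
  obtain ⟨j, hj⟩ := exists_mem_cells_topRow ⟨_, hbox⟩
  exact hbs.2.2.1.exists_mem_of_fst_le_of_le_fst hj hbox h1 h2

lemma f_eq_of_lt_topRow (hsub : Sub ν μ) {k : ℕ} (hk : 1 ≤ k) (hka : k < topRow μ ν) :
    ν.f k = μ.f k := by
  by_contra hne
  have := hsub k
  have : (k, ν.f k + 1) ∈ cells μ ν := mem_cells.2 ⟨hk, by omega, by omega⟩
  exact absurd (topRow_le this) (by omega)

lemma f_eq_zero_of_len_le (hbox : (μ.len, 1) ∈ cells μ ν) {k : ℕ} (hk : μ.len ≤ k) :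
    ν.f k = 0 := by
  obtain ⟨h1, h2, -⟩ := mem_cells.1 hbox
  have := ν.antitone h1 hk
  omega

lemma f_add_one_eq_of_topRow_le (hbs : IsBorderStrip μ ν) (hbox : (μ.len, 1) ∈ cells μ ν)
    {k : ℕ} (h1 : topRow μ ν ≤ k) (h2 : k < μ.len) : ν.f k + 1 = μ.f (k + 1) := by
  obtain ⟨j, hj⟩ := exists_mem_cells_of_topRow_le hbs hbox h1 h2.le
  obtain ⟨j', hj'⟩ := exists_mem_cells_of_topRow_le hbs hbox (by omega) h2
  exact hbs.f_add_one_eq hj hj'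

lemma cols_eq_f_topRow (hbs : IsBorderStrip μ ν) (hbox : (μ.len, 1) ∈ cells μ ν) :
    cols μ ν = μ.f (topRow μ ν) := by
  have ha := one_le_topRow hbox
  have hIcc : Prod.snd '' cells μ ν = Set.Icc 1 (μ.f (topRow μ ν)) := by
    ext j
    constructor
    · rintro ⟨⟨i, j⟩, hij, rfl⟩
      obtain ⟨-, hνj, hjμ⟩ := mem_cells.1 hij
      exact ⟨by omega, hjμ.trans (μ.antitone ha (topRow_le hij))⟩
    · rintro ⟨hj1, hja⟩
      -- the lowest box of column `j` in `μ` lies in the strip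
      set i := conjFun μ.f j
      have hai : topRow μ ν ≤ i := (μ.le_f_iff_le_conjFun hj1 ha).1 hja
      have hji : j ≤ μ.f i := (μ.le_f_iff_le_conjFun hj1 (by omega)).2 le_rfl
      have hji' : μ.f (i + 1) < j :=
        not_le.1 fun h => by have := (μ.le_f_iff_le_conjFun hj1 (by omega)).1 h; omega
      refine ⟨(i, j), mem_cells.2 ⟨by omega, ?_, hji⟩, rfl⟩
      rcases lt_or_ge i μ.len with hiℓ | hℓi
      · have := f_add_one_eq_of_topRow_le hbs hbox hai hiℓ
        omega
      · have := f_eq_zero_of_len_le hbox hℓi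
        omega
  rw [cols, hIcc, Set.ncard_Icc_nat]
  omega

lemma stripSize_eq_f_topRow_add (hbs : IsBorderStrip μ ν) (hbox : (μ.len, 1) ∈ cells μ ν) :
    stripSize μ ν = μ.f (topRow μ ν) + (μ.len - topRow μ ν) := by
  have ha := one_le_topRow hbox
  rw [stripSize_eq_sum ha fun i j h => ⟨topRow_le h, fst_le_len_of_mem_cells h⟩]
  exact sum_Icc_tsub_eq_of_add_one_eq (topRow_le_len hbox)
    (fun k h1 h2 => f_add_one_eq_of_topRow_le hbs hbox h1 h2)
    (fun k h1 _ => μ.antitone (by omega) k.le_succ) (f_eq_zero_of_len_le hbox le_rfl)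

lemma conjFun_add_one_eq_of_lt_f_topRow (hbs : IsBorderStrip μ ν)
    (hbox : (μ.len, 1) ∈ cells μ ν) {j : ℕ} (hj : 1 ≤ j) (hjc : j < μ.f (topRow μ ν)) :
    conjFun ν.f j + 1 = conjFun μ.f (j + 1) := by
  have ha := one_le_topRow hbox
  have hμa := (μ.le_f_iff_le_conjFun (j := j + 1) (by omega) ha).1 hjc
  rw [conjFun_eq_of_forall_iff (m := conjFun μ.f (j + 1) - 1)]
  · omega
  intro k hk
  rw [show k ≤ conjFun μ.f (j + 1) - 1 ↔ k + 1 ≤ conjFun μ.f (j + 1) by omega,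
    ← μ.le_f_iff_le_conjFun (by omega) (by omega)]
  rcases lt_or_ge k (topRow μ ν) with hka | hak
  · rw [f_eq_of_lt_topRow hbs.1 hk hka]
    have := μ.antitone hk hka.le
    have := μ.antitone (by omega : 1 ≤ k + 1) (show k + 1 ≤ topRow μ ν by omega)
    omega
  rcases lt_or_ge k μ.len with hkℓ | hℓk
  · have := f_add_one_eq_of_topRow_le hbs hbox hak hkℓ
    omega
  · have := f_eq_zero_of_len_le hbox hℓk
    have := μ.f_eq_zero_of_len_lt (k := k + 1) (by omega)
    omega

lemma conjFun_f_topRow_add_one (hbs : IsBorderStrip μ ν) (hbox : (μ.len, 1) ∈ cells μ ν) :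
    conjFun ν.f (μ.f (topRow μ ν)) + 1 = topRow μ ν := by
  have ha := one_le_topRow hbox
  have hpos := one_le_f_topRow hbox
  rw [conjFun_eq_of_forall_iff (m := topRow μ ν - 1)]
  · omega
  intro k hk
  rcases lt_or_ge k (topRow μ ν) with hka | hak
  · rw [f_eq_of_lt_topRow hbs.1 hk hka]
    have := μ.antitone hk hka.le
    omega
  rcases lt_or_ge k μ.len with hkℓ | hℓk
  · have := f_add_one_eq_of_topRow_le hbs hbox hak hkℓ
    have := μ.antitone ha (show topRow μ ν ≤ k + 1 by omega)
    omega
  · have := f_eq_zero_of_len_le hbox hℓk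
    omega

lemma conjFun_eq_of_f_topRow_lt (hsub : Sub ν μ) (hbox : (μ.len, 1) ∈ cells μ ν)
    {j : ℕ} (hj : μ.f (topRow μ ν) < j) : conjFun ν.f j = conjFun μ.f j := by
  have ha := one_le_topRow hbox
  refine conjFun_eq_of_forall_iff fun k hk => ?_
  rw [← μ.le_f_iff_le_conjFun (by omega) hk]
  rcases lt_or_ge k (topRow μ ν) with hka | hak
  · rw [f_eq_of_lt_topRow hsub hk hka]
  · have := hsub k
    have := μ.antitone ha hak
    omega

end TopRow

end SeqPartition

open SeqPartition in
theorem statement3_general (n : ℕ) (μ ν : SeqPartition) (c : ℕ)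
    (hbs : IsBorderStrip μ ν)
    (hsize : stripSize μ ν = 2 * (μ.len - n - 1))
    (hbox : (μ.len, 1) ∈ cells μ ν)
    (hc : c = cols μ ν) :
    (∀ i : ℕ, 1 ≤ i → i < c → (conjFun ν.f i : ℤ) = (conjFun μ.f (i + 1) : ℤ) - 1) ∧
    (conjFun ν.f c : ℤ) = 2 * n + 1 + c - μ.len ∧
    (∀ i : ℕ, c < i → conjFun ν.f i = conjFun μ.f i) := by
  rw [cols_eq_f_topRow hbs hbox] at hc
  subst hc
  rw [stripSize_eq_f_topRow_add hbs hbox] at hsize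
  have hpos := one_le_f_topRow hbox
  have ha := topRow_le_len hbox
  refine ⟨fun j hj hjc => ?_, ?_, fun j hj => conjFun_eq_of_f_topRow_lt hbs.1 hbox hj⟩
  · have := conjFun_add_one_eq_of_lt_f_topRow hbs hbox hj hjc
    omega
  · have := conjFun_f_topRow_add_one hbs hbox
    omega

open SeqPartition in
/-- Effect of removing the border strip of the symplectic modification
rule on the transpose partition. -/
theorem statement3 (n : ℕ) (μ ν : SeqPartition) (c : ℕ)
    (hμ : n + 1 < μ.len)
    (hsub : Sub ν μ)
    (hbs : IsBorderStrip μ ν)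
    (hsize : stripSize μ ν = 2 * (μ.len - n - 1))
    (hbox : (μ.len, 1) ∈ cells μ ν)
    (hc : c = cols μ ν) :
    (∀ i : ℕ, 1 ≤ i → i < c → (conjFun ν.f i : ℤ) = (conjFun μ.f (i + 1) : ℤ) - 1) ∧
    (conjFun ν.f c : ℤ) = 2 * n + 1 + c - μ.len ∧
    (∀ i : ℕ, c < i → conjFun ν.f i = conjFun μ.f i) :=
  statement3_general n μ ν c hbs hsize hbox hc
end

section
/- Let n, k ≥ 0. The number of partitions μ with μ₁ ≤ k and i_{2n}(μ) < ∞ is exactly 2^k · binomial(n+k, k). -/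
section PairFree

variable {α : Type*} {σ : α → α}

def PairFree (σ : α → α) (s : Set α) : Prop := ∀ x ∈ s, σ x ∉ s

theorem PairFree.mono {s t : Set α} (h : PairFree σ s) (hts : t ⊆ s) : PairFree σ t :=
  fun x hx hσx => h x (hts hx) (hts hσx)

/-- Trading `σ v` for `v` as the element of their pair that is left out does not affect
pair-freeness. -/
theorem pairFree_iff_of_mem_iff (hσ : Function.Involutive σ) {s t : Set α} {v : α}
    (hs : σ v ∉ s) (ht : v ∉ t) (hst : ∀ x, x ≠ v → x ≠ σ v → (x ∈ s ↔ x ∈ t)) :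
    PairFree σ s ↔ PairFree σ t := by
  have hst' : ∀ x, x ≠ v → x ≠ σ v → (σ x ∈ s ↔ σ x ∈ t) := fun x h1 h2 =>
    hst (σ x) (fun h => h2 (by rw [← h, hσ])) (fun h => h1 (hσ.injective h))
  constructor
  · intro h x hx hσx
    by_cases h1 : x = v
    · exact ht (h1 ▸ hx)
    by_cases h2 : x = σ v
    · exact ht (by rwa [h2, hσ] at hσx)
    exact h x ((hst x h1 h2).2 hx) ((hst' x h1 h2).2 hσx)
  · intro h x hx hσx
    by_cases h1 : x = v
    · exact hs (h1 ▸ hσx)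
    by_cases h2 : x = σ v
    · exact hs (h2 ▸ hx)
    exact h x ((hst x h1 h2).1 hx) ((hst' x h1 h2).1 hσx)

variable [DecidableEq α]

theorem Function.Involutive.mem_finset_image_iff (hσ : Function.Involutive σ) {F : Finset α}
    {x : α} : x ∈ F.image σ ↔ σ x ∈ F :=
  ⟨fun h => by obtain ⟨y, hy, rfl⟩ := Finset.mem_image.mp h; rwa [hσ],
    fun h => Finset.mem_image.mpr ⟨σ x, h, hσ x⟩⟩

def swapPartners (σ : α → α) (T E : Finset α) : Finset α := (T \ E) ∪ E.image σ

variable {U T E : Finset α}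

theorem card_swapPartners (hσ : Function.Involutive σ) (hU : ∀ x ∈ U, σ x ∉ U) (hTU : T ⊆ U)
    (hET : E ⊆ T) : (swapPartners σ T E).card = T.card := by
  rw [swapPartners, Finset.card_union_of_disjoint, Finset.card_image_of_injective _ hσ.injective,
    Finset.card_sdiff_add_card_eq_card hET]
  refine Finset.disjoint_left.mpr fun x => ?_
  simp only [Finset.mem_sdiff, hσ.mem_finset_image_iff]
  have := @hTU x; have := @hET (σ x); have := @hTU (σ x); have := hU x
  tauto

theorem swapPartners_mem_filter (hσ : Function.Involutive σ) (hU : ∀ x ∈ U, σ x ∉ U)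
    (hTU : T ⊆ U) (hET : E ⊆ T) [DecidablePred fun F : Finset α => PairFree σ ↑F] :
    swapPartners σ T E ∈ ((U ∪ U.image σ).powersetCard T.card).filter
      fun F : Finset α => PairFree σ ↑F := by
  simp only [Finset.mem_filter, Finset.mem_powersetCard, PairFree, Finset.mem_coe, swapPartners]
  refine ⟨⟨fun x => ?_, card_swapPartners hσ hU hTU hET⟩, fun x => ?_⟩ <;>
  · simp only [Finset.mem_union, Finset.mem_sdiff, hσ.mem_finset_image_iff, hσ x]
    have := @hTU x; have := @hET (σ x); have := @hTU (σ x); have := hU x; have := @hET x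
    tauto

theorem inter_swapPartners (hσ : Function.Involutive σ) (hU : ∀ x ∈ U, σ x ∉ U)
    (hTU : T ⊆ U) (hET : E ⊆ T) :
    (swapPartners σ T E ∪ (swapPartners σ T E).image σ) ∩ U = T ∧
      (swapPartners σ T E).image σ ∩ U = E := by
  constructor <;> ext x <;>
  · simp only [swapPartners, Finset.mem_union, Finset.mem_sdiff, Finset.mem_inter,
      hσ.mem_finset_image_iff, hσ x]
    have := @hTU x; have := @hET (σ x); have := @hTU (σ x); have := hU x; have := @hET x
    tauto

theorem swapPartners_inter (hσ : Function.Involutive σ) (hU : ∀ x ∈ U, σ x ∉ U) {F : Finset α}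
    (hFU : F ⊆ U ∪ U.image σ) (hF : PairFree σ ↑F) :
    swapPartners σ ((F ∪ F.image σ) ∩ U) (F.image σ ∩ U) = F := by
  ext x
  have := @hFU x; have := hF x; have := hF (σ x); have := hU x; have := hU (σ x)
  simp only [swapPartners, Finset.mem_union, Finset.mem_sdiff, Finset.mem_inter,
    hσ.mem_finset_image_iff, Finset.mem_coe, hσ x] at *
  tauto

/-- A pair-free `k`-subset of `U ∪ σ U` is `swapPartners σ T E` for a unique `k`-subset `T` of
`U` and `E ⊆ T`. -/
theorem card_pairFree_powersetCard (hσ : Function.Involutive σ) (hU : ∀ x ∈ U, σ x ∉ U) (k : ℕ)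
    [DecidablePred fun F : Finset α => PairFree σ ↑F] :
    (((U ∪ U.image σ).powersetCard k).filter fun F : Finset α => PairFree σ ↑F).card =
      U.card.choose k * 2 ^ k := by
  calc _ = ((U.powersetCard k).sigma Finset.powerset).card := by
        refine (Finset.card_nbij' (fun p => swapPartners σ p.1 p.2)
          (fun F => ⟨(F ∪ F.image σ) ∩ U, F.image σ ∩ U⟩) ?_ ?_ ?_ ?_).symm
        · rintro ⟨T, E⟩ h
          simp only [Finset.coe_sigma, Set.mem_sigma_iff, Finset.mem_coe, Finset.mem_powersetCard,
            Finset.mem_powerset] at h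
          obtain ⟨⟨hTU, rfl⟩, hET⟩ := h
          exact swapPartners_mem_filter hσ hU hTU hET
        · intro F hF
          simp only [Finset.coe_filter, Set.mem_ofPred_eq, Finset.mem_powersetCard] at hF
          obtain ⟨⟨hFU, rfl⟩, hpf⟩ := hF
          have hET : F.image σ ∩ U ⊆ (F ∪ F.image σ) ∩ U :=
            Finset.inter_subset_inter_right Finset.subset_union_right
          simp only [Finset.coe_sigma, Set.mem_sigma_iff, Finset.mem_coe, Finset.mem_powersetCard,
            Finset.mem_powerset]
          refine ⟨⟨Finset.inter_subset_right, ?_⟩, hET⟩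
          conv_rhs => rw [← swapPartners_inter hσ hU hFU hpf]
          exact (card_swapPartners hσ hU Finset.inter_subset_right hET).symm
        · rintro ⟨T, E⟩ h
          simp only [Finset.coe_sigma, Set.mem_sigma_iff, Finset.mem_coe, Finset.mem_powersetCard,
            Finset.mem_powerset] at h
          obtain ⟨hT, hE⟩ := inter_swapPartners hσ hU h.1.1 h.2
          simp only [hT, hE]
        · intro F hF
          simp only [Finset.coe_filter, Set.mem_ofPred_eq, Finset.mem_powersetCard] at hF
          exact swapPartners_inter hσ hU hF.1.1 hF.2
    _ = U.card.choose k * 2 ^ k := by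
        rw [Finset.card_sigma, Finset.sum_const_nat fun T hT => ?_, Finset.card_powersetCard]
        rw [Finset.card_powerset, (Finset.mem_powersetCard.mp hT).2]

end PairFree

namespace YPartition

variable {μ ν : YPartition} {i j k n r M : ℕ}

@[ext] theorem ext (h : μ.f = ν.f) : μ = ν := by
  cases μ; cases ν; simpa using h

theorem bddAbove_support : BddAbove {i | μ.f i ≠ 0} := by
  obtain ⟨N, hN⟩ := μ.ev_zero
  exact ⟨N, fun j (hj : μ.f j ≠ 0) => not_lt.mp fun hNj => hj (hN j hNj.le)⟩

theorem le_len_of_ne_zero_s7 (h : μ.f i ≠ 0) : i ≤ μ.len :=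
  le_csSup bddAbove_support h

theorem f_eq_zero_of_len_lt (h : μ.len < i) : μ.f i = 0 := by
  by_contra hi
  exact h.not_ge (le_len_of_ne_zero_s7 hi)

theorem len_le_of_forall {N : ℕ} (h : ∀ i, N < i → μ.f i = 0) : μ.len ≤ N :=
  csSup_le' fun i hi => not_lt.mp fun hNi => hi (h i hNi)

theorem f_len_ne_zero (h : 1 ≤ μ.len) : μ.f μ.len ≠ 0 := by
  refine Nat.sSup_mem ?_ bddAbove_support
  by_contra hempty
  rw [Set.not_nonempty_iff_eq_empty] at hempty
  simp [len, hempty] at h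

theorem one_le_f (h1 : 1 ≤ i) (h2 : i ≤ μ.len) : 1 ≤ μ.f i :=
  Nat.one_le_iff_ne_zero.mpr fun h => f_len_ne_zero (h1.trans h2) <|
    Nat.eq_zero_of_le_zero (h ▸ μ.antitone h1 h2)

/-! ### β-sets -/

def beta (μ : YPartition) (i : ℕ) : ℤ := μ.f i - i

def betaSet (μ : YPartition) : Set ℤ := μ.beta '' Set.Ici 1

theorem beta_lt_beta (h1 : 1 ≤ i) (h : i < j) : μ.beta j < μ.beta i := by
  have := μ.antitone h1 h.le
  simp only [beta]
  omega

theorem beta_le_beta (h1 : 1 ≤ i) (h : i ≤ j) : μ.beta j ≤ μ.beta i := by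
  rcases h.eq_or_lt with rfl | h
  · rfl
  · exact (beta_lt_beta h1 h).le

theorem beta_injOn : Set.InjOn μ.beta (Set.Ici 1) := by
  intro i hi j hj h
  by_contra hne
  rcases lt_or_gt_of_ne hne with hij | hji
  · exact (beta_lt_beta hi hij).ne' h
  · exact (beta_lt_beta hj hji).ne h

theorem beta_of_len_lt (h : μ.len < i) : μ.beta i = -i := by
  simp [beta, f_eq_zero_of_len_lt h]

theorem neg_le_beta (i : ℕ) : -(i : ℤ) ≤ μ.beta i := by
  simp [beta]

theorem neg_len_notMem_betaSet : -(μ.len : ℤ) ∉ μ.betaSet := by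
  rintro ⟨i, hi, h⟩
  simp only [beta] at h
  rcases le_or_gt i μ.len with hiL | hiL
  · have := one_le_f hi hiL
    omega
  · rw [f_eq_zero_of_len_lt hiL] at h
    omega

theorem mem_betaSet_of_lt_neg_len {x : ℤ} (h : x < -μ.len) : x ∈ μ.betaSet :=
  ⟨(-x).toNat, by simp only [Set.mem_Ici]; omega, by
    rw [beta_of_len_lt (by omega)]; omega⟩

theorem f_one_le_iff : μ.f 1 ≤ k ↔ ∀ x ∈ μ.betaSet, x < k := by
  constructor
  · rintro h _ ⟨i, hi, rfl⟩
    have := beta_le_beta (μ := μ) le_rfl hi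
    simp only [beta] at this ⊢
    omega
  · intro h
    have := h _ ⟨1, Set.mem_Ici.mpr le_rfl, rfl⟩
    simp only [beta] at this
    omega

theorem betaSet_injective : Function.Injective betaSet := by
  have f_le : ∀ {μ ν : YPartition} (i : ℕ), μ.betaSet ⊆ ν.betaSet →
      (∀ j < i, μ.f j = ν.f j) → μ.f i ≤ ν.f i := by
    intro μ ν i hsub hlt
    rcases Nat.eq_zero_or_pos i with rfl | hi
    · simp [μ.f_zero]
    obtain ⟨j, hj, hji⟩ := hsub ⟨i, hi, rfl⟩
    have hij : i ≤ j := by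
      by_contra! hji'
      have hβ : ν.beta j = μ.beta j := by simp [beta, hlt j hji']
      exact (beta_lt_beta hj hji').ne' (hβ ▸ hji)
    have := hji ▸ beta_le_beta (μ := ν) hi hij
    simp only [beta] at this
    omega
  intro μ ν h
  ext i
  induction i using Nat.strong_induction_on with
  | _ i ih => exact (f_le i h.le ih).antisymm (f_le i h.ge fun j hj => (ih j hj).symm)

/-! ### Border strips ending in the first column -/

theorem mem_cells : (i, j) ∈ cells μ ν ↔ 1 ≤ i ∧ ν.f i < j ∧ j ≤ μ.f i :=
  Iff.rfl

theorem Adj.symm {a b : ℕ × ℕ} (h : Adj a b) : Adj b a := by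
  unfold Adj at *
  omega

abbrev Joined (s : Set (ℕ × ℕ)) : ℕ × ℕ → ℕ × ℕ → Prop :=
  Relation.ReflTransGen fun x y => x ∈ s ∧ y ∈ s ∧ Adj x y

theorem isConnected_of_joined {s : Set (ℕ × ℕ)} {c : ℕ × ℕ} (h : ∀ a ∈ s, Joined s a c) :
    IsConnected s := by
  have : Std.Symm fun x y => x ∈ s ∧ y ∈ s ∧ Adj x y :=
    ⟨fun _ _ ⟨hx, hy, hxy⟩ => ⟨hy, hx, hxy.symm⟩⟩
  exact fun a ha b hb => (h a ha).trans (Relation.ReflTransGen.stdSymm.symm _ _ (h b hb))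

theorem joined_row {s : Set (ℕ × ℕ)} {i j j' : ℕ} (hjj : j' ≤ j)
    (h : ∀ l, j' ≤ l → l ≤ j → (i, l) ∈ s) : Joined s (i, j) (i, j') := by
  induction j, hjj using Nat.le_induction with
  | base => rfl
  | succ j hj ih =>
    refine .head ⟨h _ hj.step le_rfl, h _ hj (by omega), .inl ⟨rfl, .inr rfl⟩⟩ ?_
    exact ih fun l h1 h2 => h l h1 (by omega)

theorem exists_crossing_of_joined {s : Set (ℕ × ℕ)} {a b : ℕ × ℕ} {t : ℕ} (h : Joined s a b)
    (ha : a.1 ≤ t) (hb : t < b.1) : ∃ j, (t, j) ∈ s ∧ (t + 1, j) ∈ s := by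
  induction h with
  | refl => omega
  | @tail c b _ hcb ih =>
    obtain ⟨hc, hb', hadj⟩ := hcb
    rcases le_or_gt c.1 t with hct | hct
    · obtain ⟨c1, c2⟩ := c
      obtain ⟨b1, b2⟩ := b
      have : c1 = t ∧ b1 = t + 1 ∧ b2 = c2 := by unfold Adj at hadj; simp only at *; omega
      obtain ⟨rfl, rfl, rfl⟩ := this
      exact ⟨b2, hc, hb'⟩
    · exact ih hct

/-- `μ / removeRow μ r` is the border strip running from the end of row `r` to the box
`(ℓ(μ), 1)`. -/
def removeRow (μ : YPartition) (r : ℕ) : YPartition where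
  f i := if i = 0 then 0 else if i < r then μ.f i else μ.f (i + 1) - 1
  f_zero := by simp
  antitone := by
    intro i j h1 h2
    have := μ.antitone h1 h2
    have := μ.antitone h1 (by omega : i ≤ j + 1)
    have := μ.antitone (by omega : 1 ≤ i + 1) (by omega : i + 1 ≤ j + 1)
    split_ifs <;> omega
  ev_zero := by
    obtain ⟨N, hN⟩ := μ.ev_zero
    refine ⟨N, fun i hi => ?_⟩
    have := hN i hi
    have := hN (i + 1) (by omega)
    split_ifs <;> omega

theorem removeRow_f_of_lt (h : i < r) : (removeRow μ r).f i = μ.f i := by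
  simp only [removeRow, if_pos h]
  split_ifs with h0
  · rw [h0, μ.f_zero]
  · rfl

theorem removeRow_f_of_le (hr : 1 ≤ r) (h : r ≤ i) : (removeRow μ r).f i = μ.f (i + 1) - 1 := by
  simp only [removeRow, if_neg (show i ≠ 0 by omega), if_neg (show ¬i < r by omega)]

theorem mem_cells_removeRow (hr : 1 ≤ r) :
    (i, j) ∈ cells μ (removeRow μ r) ↔ r ≤ i ∧ 0 < j ∧ μ.f (i + 1) ≤ j ∧ j ≤ μ.f i := by
  rw [mem_cells]
  rcases lt_or_ge i r with hir | hir
  · rw [removeRow_f_of_lt hir]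
    omega
  · rw [removeRow_f_of_le hr hir]
    omega

theorem le_len_of_mem_cells_removeRow (hr : 1 ≤ r) (h : (i, j) ∈ cells μ (removeRow μ r)) :
    i ≤ μ.len :=
  le_len_of_ne_zero_s7 (by rw [mem_cells_removeRow hr] at h; omega)

theorem corner_mem_cells_removeRow (hr : 1 ≤ r) (hrL : r ≤ μ.len) :
    (μ.len, 1) ∈ cells μ (removeRow μ r) := by
  rw [mem_cells_removeRow hr, f_eq_zero_of_len_lt (Nat.lt_succ_self _)]
  exact ⟨hrL, one_pos, zero_le_one, one_le_f (hr.trans hrL) le_rfl⟩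

theorem len_removeRow_lt (hr : 1 ≤ r) (hrL : r ≤ μ.len) : (removeRow μ r).len < μ.len := by
  have : (removeRow μ r).len ≤ μ.len - 1 := len_le_of_forall fun i hi => by
    rw [removeRow_f_of_le hr (by omega), f_eq_zero_of_len_lt (by omega)]
  omega

def content (c : ℕ × ℕ) : ℤ := c.2 - c.1

theorem content_injOn_cells_removeRow (hr : 1 ≤ r) :
    Set.InjOn content (cells μ (removeRow μ r)) := by
  have content_ne : ∀ {i j i' j' : ℕ}, (i, j) ∈ cells μ (removeRow μ r) →
      (i', j') ∈ cells μ (removeRow μ r) → i < i' → content (i, j) ≠ content (i', j') := by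
    intro i j i' j' hc hc' hii'
    rw [mem_cells_removeRow hr] at hc hc'
    have := μ.antitone (by omega : 1 ≤ i + 1) hii'
    simp only [content]
    omega
  rintro ⟨i, j⟩ hc ⟨i', j'⟩ hc' h
  rcases lt_trichotomy i i' with hlt | rfl | hgt
  · exact absurd h (content_ne hc hc' hlt)
  · simp only [content] at h
    rw [show j = j' by omega]
  · exact absurd h.symm (content_ne hc' hc hgt)

theorem content_image_cells_removeRow (hr : 1 ≤ r) (hrL : r ≤ μ.len) :
    content '' cells μ (removeRow μ r) = Set.Icc (1 - (μ.len : ℤ)) (μ.beta r) := by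
  ext t
  constructor
  · rintro ⟨⟨i, j⟩, hc, rfl⟩
    have hiL := le_len_of_mem_cells_removeRow hr hc
    rw [mem_cells_removeRow hr] at hc
    have := beta_le_beta (μ := μ) hr hc.1
    simp only [content, beta, Set.mem_Icc] at this ⊢
    omega
  · rintro ⟨ht1, ht2⟩
    set i := Nat.findGreatest (fun i => t ≤ μ.beta i) μ.len
    have hri : r ≤ i := Nat.le_findGreatest hrL ht2
    have hti : t ≤ μ.beta i := Nat.findGreatest_spec (P := fun i => t ≤ μ.beta i) hrL ht2
    have hiL : i ≤ μ.len := Nat.findGreatest_le μ.len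
    have hnext : μ.beta (i + 1) < t := by
      rcases hiL.lt_or_eq with hiL | hiL
      · exact not_le.mp (Nat.findGreatest_is_greatest (Nat.lt_succ_self i) hiL)
      · rw [beta_of_len_lt (by omega)]
        omega
    have hpos : 0 < t + i := by
      rcases hiL.lt_or_eq with hiL | hiL
      · have := one_le_f (μ := μ) (by omega : 1 ≤ i + 1) hiL
        simp only [beta] at hnext
        omega
      · omega
    refine ⟨(i, (t + i).toNat), ?_, by simp only [content]; omega⟩
    rw [mem_cells_removeRow hr]
    simp only [beta] at hti hnext
    omega

theorem stripSize_removeRow (hr : 1 ≤ r) (hrL : r ≤ μ.len) :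
    (stripSize μ (removeRow μ r) : ℤ) = μ.beta r + μ.len := by
  rw [stripSize, ← (content_injOn_cells_removeRow hr).ncard_image,
    content_image_cells_removeRow hr hrL, ← Finset.coe_Icc, Set.ncard_coe_finset, Int.card_Icc]
  have := beta_le_beta (μ := μ) le_rfl hr
  have := neg_le_beta (μ := μ) r
  omega

theorem joined_corner_removeRow (hr : 1 ≤ r) (h : (i, j) ∈ cells μ (removeRow μ r)) :
    Joined (cells μ (removeRow μ r)) (i, j) (μ.len, 1) := by
  induction hd : μ.len - i generalizing i j with
  | zero =>
    have hiL : i = μ.len := le_antisymm (le_len_of_mem_cells_removeRow hr h) (by omega)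
    rw [mem_cells_removeRow hr] at h
    subst hiL
    refine joined_row h.2.1 fun l hl1 hl2 => ?_
    rw [mem_cells_removeRow hr, f_eq_zero_of_len_lt (Nat.lt_succ_self _)]
    omega
  | succ d ih =>
    rw [mem_cells_removeRow hr] at h
    have hfi : 1 ≤ μ.f (i + 1) := one_le_f (by omega) (by omega)
    have hrow : Joined (cells μ (removeRow μ r)) (i, j) (i, μ.f (i + 1)) :=
      joined_row h.2.2.1 fun l hl1 hl2 => by rw [mem_cells_removeRow hr]; omega
    have hbelow : (i + 1, μ.f (i + 1)) ∈ cells μ (removeRow μ r) := by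
      rw [mem_cells_removeRow hr]
      exact ⟨by omega, hfi, μ.antitone (by omega) (by omega), le_rfl⟩
    have hcol : (i, μ.f (i + 1)) ∈ cells μ (removeRow μ r) := by
      rw [mem_cells_removeRow hr]
      exact ⟨h.1, hfi, le_rfl, μ.antitone (by omega) (by omega)⟩
    exact hrow.trans (.head ⟨hcol, hbelow, .inr ⟨rfl, .inl rfl⟩⟩ (ih hbelow (by omega)))

theorem isBorderStrip_removeRow (hr : 1 ≤ r) (hrL : r ≤ μ.len) :
    IsBorderStrip μ (removeRow μ r) := by
  refine ⟨fun i => ?_, ⟨_, corner_mem_cells_removeRow hr hrL⟩,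
    isConnected_of_joined fun _ h => joined_corner_removeRow hr h, ?_⟩
  · rcases lt_or_ge i r with hir | hir
    · rw [removeRow_f_of_lt hir]
    · have := μ.antitone (by omega : 1 ≤ i) (by omega : i ≤ i + 1)
      rw [removeRow_f_of_le hr hir]
      omega
  · rintro ⟨i, j, h, -, -, h'⟩
    rw [mem_cells_removeRow hr] at h h'
    omega

/-- Where a border strip passes from row `t` to row `t + 1`, it does so in a single column,
as it contains no 2×2 square. -/
theorem f_add_one_eq_of_isBorderStrip (hbs : IsBorderStrip μ ν) {a b : ℕ × ℕ}
    (ha : a ∈ cells μ ν) (hb : b ∈ cells μ ν) {t : ℕ} (ht : 1 ≤ t) (hat : a.1 ≤ t)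
    (htb : t < b.1) : ν.f t + 1 = μ.f (t + 1) := by
  obtain ⟨-, -, hconn, hsq⟩ := hbs
  obtain ⟨j, hj, hj'⟩ := exists_crossing_of_joined (hconn a ha b hb) hat htb
  rw [mem_cells] at hj hj'
  have := μ.antitone ht (by omega : t ≤ t + 1)
  have := ν.antitone ht (by omega : t ≤ t + 1)
  by_contra hne
  refine hsq ⟨t, ν.f t + 1, ?_⟩
  simp only [mem_cells]
  omega

theorem eq_removeRow_of_isBorderStrip (hbs : IsBorderStrip μ ν)
    (hbox : (μ.len, 1) ∈ cells μ ν) : ∃ r, 1 ≤ r ∧ r ≤ μ.len ∧ ν = removeRow μ r := by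
  obtain ⟨hL, hνL, hμL⟩ := mem_cells.mp hbox
  have hex : ∃ i, ν.f i < μ.f i := ⟨μ.len, by omega⟩
  set r := Nat.find hex
  have hr : ν.f r < μ.f r := Nat.find_spec hex
  have hr1 : 1 ≤ r := Nat.one_le_iff_ne_zero.mpr fun h0 => by
    simp only [h0, μ.f_zero, ν.f_zero, lt_self_iff_false] at hr
  have hrL : r ≤ μ.len := le_len_of_ne_zero_s7 (by omega)
  have hstart : (r, ν.f r + 1) ∈ cells μ ν := mem_cells.mpr ⟨hr1, by omega, by omega⟩
  refine ⟨r, hr1, hrL, ext (funext fun i => ?_)⟩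
  have hsub := hbs.1 i
  rcases lt_or_ge i r with hir | hir
  · have := Nat.find_min hex hir
    rw [removeRow_f_of_lt hir]
    omega
  rw [removeRow_f_of_le hr1 hir]
  rcases lt_trichotomy i μ.len with hiL | rfl | hiL
  · have := f_add_one_eq_of_isBorderStrip hbs hstart hbox (by omega) hir hiL
    omega
  · rw [f_eq_zero_of_len_lt (Nat.lt_succ_self _)]
    omega
  · rw [f_eq_zero_of_len_lt hiL] at hsub
    rw [f_eq_zero_of_len_lt (show μ.len < i + 1 by omega)]
    omega

theorem betaSet_removeRow (hr : 1 ≤ r) (hrL : r ≤ μ.len) :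
    (removeRow μ r).betaSet = insert (-(μ.len : ℤ)) (μ.betaSet \ {μ.beta r}) := by
  have hlt : ∀ {i}, i < r → (removeRow μ r).beta i = μ.beta i := fun hi => by
    simp only [beta, removeRow_f_of_lt hi]
  have hmid : ∀ {i}, r ≤ i → i < μ.len → (removeRow μ r).beta i = μ.beta (i + 1) := by
    intro i hri hiL
    have := one_le_f (μ := μ) (by omega : 1 ≤ i + 1) hiL
    simp only [beta, removeRow_f_of_le hr hri]
    omega
  have hend : ∀ {i}, μ.len ≤ i → (removeRow μ r).beta i = -i := by
    intro i hiL
    simp only [beta, removeRow_f_of_le hr (hrL.trans hiL),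
      f_eq_zero_of_len_lt (show μ.len < i + 1 by omega)]
    omega
  have hne : ∀ {i}, 1 ≤ i → i ≠ r → μ.beta i ≠ μ.beta r := fun hi h =>
    beta_injOn.ne hi hr h
  ext x
  simp only [Set.mem_insert_iff, Set.mem_sdiff, Set.mem_singleton_iff]
  constructor
  · rintro ⟨i, hi, rfl⟩
    rcases lt_or_ge i r with hir | hir
    · exact .inr ⟨⟨i, hi, (hlt hir).symm⟩, hlt hir ▸ hne hi hir.ne⟩
    rcases lt_trichotomy i μ.len with hiL | rfl | hiL
    · rw [hmid hir hiL]
      exact .inr ⟨⟨i + 1, by simp, rfl⟩, hne (by omega) (by omega)⟩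
    · exact .inl (hend le_rfl)
    · rw [hend hiL.le, ← beta_of_len_lt hiL]
      exact .inr ⟨⟨i, hi, rfl⟩, hne hi (by omega)⟩
  · rintro (rfl | ⟨⟨i, hi, rfl⟩, hir⟩)
    · exact ⟨μ.len, Set.mem_Ici.mpr (hr.trans hrL), hend le_rfl⟩
    rcases lt_trichotomy i r with hir' | rfl | hir'
    · exact ⟨i, hi, hlt hir'⟩
    · exact absurd rfl hir
    rcases le_or_gt i μ.len with hiL | hiL
    · refine ⟨i - 1, Set.mem_Ici.mpr (by omega), ?_⟩
      rw [hmid (by omega) (by omega), Nat.sub_add_cancel (by omega)]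
    · exact ⟨i, hi, by rw [hend hiL.le, beta_of_len_lt hiL]⟩

/-! ### The modification rule -/

def reflect (n : ℕ) (x : ℤ) : ℤ := -2 * n - 2 - x

theorem reflect_involutive (n : ℕ) : Function.Involutive (reflect n) := fun x => by
  simp [reflect]

def Admissible (n : ℕ) (μ : YPartition) : Prop := PairFree (reflect n) μ.betaSetᶜ

theorem admissible_of_len_le (h : μ.len ≤ n) : Admissible n μ := by
  intro x hx hσx
  rcases le_or_gt x (-n - 1) with hle | hgt
  · exact hx (mem_betaSet_of_lt_neg_len (by omega))
  · exact hσx (mem_betaSet_of_lt_neg_len (by simp only [reflect]; omega))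

theorem len_sub_mem_betaSet (h : Admissible n μ) : (μ.len : ℤ) - 2 * n - 2 ∈ μ.betaSet := by
  by_contra hmem
  refine h _ hmem ?_
  convert (neg_len_notMem_betaSet (μ := μ)) using 2
  simp only [reflect]
  ring

theorem len_le_of_admissible (h1 : μ.f 1 ≤ k) (h : Admissible n μ) : μ.len ≤ 2 * n + k + 1 := by
  have := f_one_le_iff.mp h1 _ (len_sub_mem_betaSet h)
  omega

theorem exists_beta_eq_of_admissible (h : Admissible n μ) (hn : n < μ.len) :
    ∃ r, 1 ≤ r ∧ r ≤ μ.len ∧ μ.beta r = μ.len - 2 * n - 2 := by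
  obtain ⟨r, hr, hβ⟩ := len_sub_mem_betaSet h
  refine ⟨r, hr, ?_, hβ⟩
  by_contra! hrL
  rw [beta_of_len_lt hrL] at hβ
  omega

/-- Removing the strip replaces the bead `β_r = ℓ - 2n - 2` by its partner `-ℓ`. -/
theorem admissible_removeRow_iff (hr : 1 ≤ r) (hrL : r ≤ μ.len)
    (hβ : μ.beta r = μ.len - 2 * n - 2) :
    Admissible n (removeRow μ r) ↔ Admissible n μ := by
  have hσ : reflect n (μ.beta r) = -μ.len := by
    rw [reflect, hβ]
    ring
  refine pairFree_iff_of_mem_iff (reflect_involutive n) (v := μ.beta r) ?_ ?_ fun x h1 h2 => ?_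
  · simp [hσ, betaSet_removeRow hr hrL]
  · simpa using ⟨r, hr, rfl⟩
  · rw [hσ] at h2
    simp [betaSet_removeRow hr hrL, h1, h2]

theorem admissible_of_modRule {i : ℕ} {τ : YPartition} (h : ModRule n μ i τ) :
    Admissible n μ := by
  induction h with
  | base μ hμ => exact admissible_of_len_le hμ
  | step μ ν τ i hlen hbs hsize hbox _ ih =>
    obtain ⟨r, hr, hrL, rfl⟩ := eq_removeRow_of_isBorderStrip hbs hbox
    have := stripSize_removeRow hr hrL
    rw [hsize] at this
    exact (admissible_removeRow_iff hr hrL (by omega)).1 ih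

theorem exists_modRule_of_admissible (h : Admissible n μ) : ∃ i τ, ModRule n μ i τ := by
  induction hL : μ.len using Nat.strong_induction_on generalizing μ with
  | _ L ih =>
    rcases le_or_gt μ.len n with hn | hn
    · exact ⟨0, μ, .base μ hn⟩
    obtain ⟨r, hr, hrL, hβ⟩ := exists_beta_eq_of_admissible h hn
    obtain ⟨i, τ, hν⟩ := ih _ (hL ▸ len_removeRow_lt hr hrL)
      ((admissible_removeRow_iff hr hrL hβ).2 h) rfl
    have hsize : stripSize μ (removeRow μ r) = 2 * (μ.len - n - 1) := by
      have := stripSize_removeRow hr hrL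
      omega
    exact ⟨_, τ, .step μ _ τ i hn (isBorderStrip_removeRow hr hrL) hsize
      (corner_mem_cells_removeRow hr hrL) hν⟩

theorem i2_lt_top_iff : i2 n μ < ⊤ ↔ ∃ i τ, ModRule n μ i τ := by
  simp [i2, sInf_lt_iff]

theorem i2_lt_top_iff_admissible : i2 n μ < ⊤ ↔ Admissible n μ :=
  i2_lt_top_iff.trans ⟨fun ⟨_, _, h⟩ => admissible_of_modRule h, exists_modRule_of_admissible⟩

/-! ### Counting -/

theorem add_le_add_of_succ_lt {g : ℕ → ℤ} (hg : ∀ i, 1 ≤ i → g (i + 1) < g i) {i j : ℕ}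
    (hi : 1 ≤ i) (hij : i ≤ j) : g j + j ≤ g i + i := by
  induction j, hij using Nat.le_induction with
  | base => rfl
  | succ j hij ih =>
    have := hg j (hi.trans hij)
    push_cast
    omega

def ofBeta (g : ℕ → ℤ) (hg : ∀ i, 1 ≤ i → g (i + 1) < g i) (N : ℕ)
    (hN : ∀ i, N < i → g i = -i) : YPartition where
  f i := if i = 0 then 0 else (g i + i).toNat
  f_zero := if_pos rfl
  antitone i j hi hij := by
    have := add_le_add_of_succ_lt hg hi hij
    simp only [if_neg (show i ≠ 0 by omega), if_neg (show j ≠ 0 by omega)]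
    omega
  ev_zero := ⟨N + 1, fun i hi => by
    simp only [hN i (by omega), if_neg (show i ≠ 0 by omega)]
    omega⟩

theorem beta_ofBeta {g : ℕ → ℤ} (hg : ∀ i, 1 ≤ i → g (i + 1) < g i) {N : ℕ}
    (hN : ∀ i, N < i → g i = -i) {i : ℕ} (hi : 1 ≤ i) : (ofBeta g hg N hN).beta i = g i := by
  have := add_le_add_of_succ_lt hg hi (Nat.le_add_right i (N + 1))
  rw [hN _ (by omega)] at this
  simp only [beta, ofBeta, if_neg (show i ≠ 0 by omega)]
  push_cast at this
  omega

def betaFinset (M : ℕ) (μ : YPartition) : Finset ℤ := (Finset.Icc 1 M).image μ.beta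

theorem card_betaFinset : (betaFinset M μ).card = M := by
  rw [betaFinset, Finset.card_image_of_injOn, Nat.card_Icc, Nat.add_sub_cancel]
  exact beta_injOn.mono fun i hi => (Finset.mem_Icc.mp hi).1

theorem betaSet_eq_betaFinset_union (hl : μ.len ≤ M) :
    μ.betaSet = ↑(betaFinset M μ) ∪ Set.Iio (-(M : ℤ)) := by
  ext x
  simp only [betaFinset, Finset.coe_image, Finset.coe_Icc, Set.mem_union, Set.mem_image,
    Set.mem_Icc, Set.mem_Iio]
  constructor
  · rintro ⟨i, hi, rfl⟩
    rcases le_or_gt i M with hiM | hiM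
    · exact .inl ⟨i, ⟨hi, hiM⟩, rfl⟩
    · rw [beta_of_len_lt (by omega)]
      exact .inr (by omega)
  · rintro (⟨i, hi, rfl⟩ | hx)
    · exact ⟨i, hi.1, rfl⟩
    · exact mem_betaSet_of_lt_neg_len (by omega)

theorem betaFinset_subset (h1 : μ.f 1 ≤ k) :
    betaFinset M μ ⊆ Finset.Icc (-(M : ℤ)) (k - 1) := by
  intro x hx
  obtain ⟨i, hi, rfl⟩ := Finset.mem_image.mp hx
  rw [Finset.mem_Icc] at hi ⊢
  have := neg_le_beta (μ := μ) i
  have := f_one_le_iff.mp h1 _ ⟨i, hi.1, rfl⟩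
  omega

theorem exists_betaFinset_eq {G : Finset ℤ} (hG : G.card = M) (hlo : ∀ x ∈ G, -(M : ℤ) ≤ x) :
    ∃ μ : YPartition, μ.len ≤ M ∧ betaFinset M μ = G := by
  set e := G.orderEmbOfFin hG
  let g : ℕ → ℤ := fun i => if h : 1 ≤ i ∧ i ≤ M then e ⟨M - i, by omega⟩ else -i
  have hg : ∀ i, 1 ≤ i → g (i + 1) < g i := by
    intro i hi
    simp only [g]
    split_ifs with h h' h'
    · exact e.strictMono (Fin.mk_lt_mk.mpr (by omega))
    · omega
    · have : -(M : ℤ) ≤ e ⟨M - i, by omega⟩ := hlo _ (G.orderEmbOfFin_mem hG _)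
      omega
    · omega
  have hN : ∀ i, M < i → g i = -i := fun i hi => dif_neg (by omega)
  refine ⟨ofBeta g hg M hN, len_le_of_forall fun i hi => ?_, ?_⟩
  · have := beta_ofBeta hg hN (i := i) (by omega)
    simp only [beta, hN i hi] at this
    omega
  ext x
  simp only [betaFinset, Finset.mem_image, Finset.mem_Icc]
  constructor
  · rintro ⟨i, hi, rfl⟩
    rw [beta_ofBeta hg hN hi.1]
    simp only [g, dif_pos hi]
    exact G.orderEmbOfFin_mem hG _
  · intro hx
    obtain ⟨a, rfl⟩ : x ∈ Set.range e := by rwa [Finset.range_orderEmbOfFin]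
    refine ⟨M - a, ⟨by omega, by omega⟩, ?_⟩
    rw [beta_ofBeta hg hN (by omega)]
    simp only [g, dif_pos (show 1 ≤ M - (a : ℕ) ∧ M - (a : ℕ) ≤ M by omega)]
    congr 1
    exact Fin.ext (by simp only; omega)

noncomputable def window (n k : ℕ) : Finset ℤ := Finset.Icc (-((2 * n + k + 1 : ℕ) : ℤ)) (k - 1)

noncomputable def gaps (n k : ℕ) (μ : YPartition) : Finset ℤ :=
  window n k \ betaFinset (2 * n + k + 1) μ

theorem admissible_iff_pairFree_gaps (h1 : μ.f 1 ≤ k) (hl : μ.len ≤ 2 * n + k + 1) :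
    Admissible n μ ↔ PairFree (reflect n) ↑(gaps n k μ) := by
  have hB := betaSet_eq_betaFinset_union hl
  have hgaps : ∀ x, x ∈ gaps n k μ ↔ x ∈ window n k ∧ x ∉ μ.betaSet := by
    intro x
    simp only [gaps, window, Finset.mem_sdiff, Finset.mem_Icc, hB, Set.mem_union,
      Finset.mem_coe, Set.mem_Iio, not_or]
    constructor
    · rintro ⟨hx, hxB⟩
      exact ⟨hx, hxB, by push_cast; omega⟩
    · rintro ⟨hx, hxB, -⟩
      exact ⟨hx, hxB⟩
  constructor
  · exact fun h => h.mono fun x hx => ((hgaps x).mp hx).2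
  · intro h x hx hσx
    have := f_one_le_iff.mp h1
    simp only [Set.mem_compl_iff, hB, Set.mem_union, Set.mem_Iio, not_or, not_lt] at hx hσx
    refine h x ((hgaps x).mpr ⟨?_, ?_⟩) ((hgaps _).mpr ⟨?_, ?_⟩) <;>
      simp only [window, Finset.mem_Icc, hB, Set.mem_union, Finset.mem_coe,
        Set.mem_Iio, not_or, not_lt, reflect] at hx hσx ⊢ <;> omega

theorem gaps_injOn : Set.InjOn (gaps n k) {μ | μ.f 1 ≤ k ∧ Admissible n μ} := by
  intro μ ⟨hμ1, hμ⟩ ν ⟨hν1, hν⟩ h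
  have hfin : betaFinset (2 * n + k + 1) μ = betaFinset (2 * n + k + 1) ν := by
    rw [← Finset.sdiff_sdiff_eq_self (betaFinset_subset hμ1),
      ← Finset.sdiff_sdiff_eq_self (betaFinset_subset hν1)]
    exact congrArg (window n k \ ·) h
  apply betaSet_injective
  rw [betaSet_eq_betaFinset_union (len_le_of_admissible hμ1 hμ),
    betaSet_eq_betaFinset_union (len_le_of_admissible hν1 hν), hfin]

theorem image_gaps [DecidablePred fun F : Finset ℤ => PairFree (reflect n) ↑F] :
    gaps n k '' {μ | μ.f 1 ≤ k ∧ Admissible n μ} =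
      ↑(((window n k).powersetCard k).filter fun F : Finset ℤ => PairFree (reflect n) ↑F) := by
  ext F
  simp only [Set.mem_image, Set.mem_ofPred_eq, Finset.coe_filter, Finset.mem_powersetCard]
  constructor
  · rintro ⟨μ, ⟨h1, h⟩, rfl⟩
    have hl := len_le_of_admissible h1 h
    refine ⟨⟨Finset.sdiff_subset, ?_⟩, (admissible_iff_pairFree_gaps h1 hl).mp h⟩
    have hsub : betaFinset (2 * n + k + 1) μ ⊆ window n k := betaFinset_subset h1
    rw [gaps, Finset.card_sdiff_of_subset hsub, card_betaFinset, window,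
      Int.card_Icc]
    omega
  · rintro ⟨⟨hFw, hFk⟩, hpf⟩
    have hG : (window n k \ F).card = 2 * n + k + 1 := by
      rw [Finset.card_sdiff_of_subset hFw, window, Int.card_Icc, hFk]
      omega
    obtain ⟨μ, hl, hμ⟩ := exists_betaFinset_eq hG fun x hx => by
      simp only [window, Finset.mem_sdiff, Finset.mem_Icc] at hx
      push_cast
      omega
    have hgaps : gaps n k μ = F := by rw [gaps, hμ, Finset.sdiff_sdiff_eq_self hFw]
    have h1 : μ.f 1 ≤ k := by
      refine f_one_le_iff.mpr fun x hx => ?_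
      rw [betaSet_eq_betaFinset_union hl, hμ] at hx
      simp only [window, Set.mem_union, Finset.mem_coe, Finset.mem_sdiff, Finset.mem_Icc,
        Set.mem_Iio] at hx
      push_cast at hx
      omega
    exact ⟨μ, ⟨h1, (admissible_iff_pairFree_gaps h1 hl).mpr (hgaps ▸ hpf)⟩, hgaps⟩

/-- Outside its fixed point `-n-1`, the window splits into the pairs `{x, reflect n x}` with
`x ∈ [-n, k-1]`. -/
theorem card_pairFree_window [DecidablePred fun F : Finset ℤ => PairFree (reflect n) ↑F] :
    (((window n k).powersetCard k).filter fun F : Finset ℤ => PairFree (reflect n) ↑F).card =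
      2 ^ k * Nat.choose (n + k) k := by
  set U := Finset.Icc (-(n : ℤ)) (k - 1)
  have hU : ∀ x ∈ U, reflect n x ∉ U := by
    intro x hx
    simp only [U, Finset.mem_Icc, reflect] at hx ⊢
    omega
  have hmem : ∀ {x : ℤ}, x ≠ -n - 1 → (x ∈ window n k ↔ x ∈ U ∪ U.image (reflect n)) := by
    intro x hx
    rw [Finset.mem_union, (reflect_involutive n).mem_finset_image_iff]
    simp only [window, U, Finset.mem_Icc, reflect]
    omega
  have hfix : ∀ F : Finset ℤ, PairFree (reflect n) ↑F → ∀ x ∈ F, x ≠ -n - 1 := by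
    rintro F hF x hx rfl
    have : reflect n (-n - 1) = -n - 1 := by rw [reflect]; ring
    exact hF _ hx (by rw [Finset.mem_coe, this]; exact hx)
  have hUcard : U.card = n + k := by
    simp only [U, Int.card_Icc]
    omega
  rw [mul_comm, ← hUcard, ← card_pairFree_powersetCard (reflect_involutive n) hU k]
  congr 1
  ext F
  simp only [Finset.mem_filter, Finset.mem_powersetCard, and_assoc]
  constructor
  · rintro ⟨hF, hk, hpf⟩
    exact ⟨fun x hx => (hmem (hfix F hpf x hx)).mp (hF hx), hk, hpf⟩
  · rintro ⟨hF, hk, hpf⟩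
    exact ⟨fun x hx => (hmem (hfix F hpf x hx)).mpr (hF hx), hk, hpf⟩

end YPartition

open YPartition in
/-- There are exactly `2^k · (n+k choose k)` partitions `μ` with
`μ₁ ≤ k` and `i_{2n}(μ) < ∞`. -/
theorem statement7 (n k : ℕ) :
    Set.ncard {μ : YPartition | μ.f 1 ≤ k ∧ i2 n μ < ⊤} = 2 ^ k * Nat.choose (n + k) k := by
  classical
  simp_rw [i2_lt_top_iff_admissible]
  rw [← gaps_injOn.ncard_image, image_gaps, Set.ncard_coe_finset, card_pairFree_window]
end

section
/- Let n ≥ 0 and let λ be a partition with i_{2n}(λ) < ∞. Then ℓ(λ) ≤ λ₁ + 2n + 1. -/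
/-- A partition: a weakly decreasing sequence of nonnegative integers, indexed starting at 1
(`f 0 = 0` by convention), with finitely many nonzero terms. `f i` is the part `λ_i`. -/
structure NatPartition where
  f : ℕ → ℕ
  f_zero : f 0 = 0
  antitone : ∀ ⦃i j : ℕ⦄, 1 ≤ i → i ≤ j → f j ≤ f i
  ev_zero : ∃ N, ∀ i, N ≤ i → f i = 0

namespace NatPartition

/-- The number of nonzero parts `ℓ(λ)`. -/
noncomputable def len (p : NatPartition) : ℕ := sSup {i | p.f i ≠ 0}

/-- The size `|λ| = Σ_i λ_i`. -/
noncomputable def size (p : NatPartition) : ℕ := ∑ᶠ i, p.f i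

/-- The transpose (conjugate): `g† j = #{i ≥ 1 : g i ≥ j}`. -/
noncomputable def conjFun (g : ℕ → ℕ) (j : ℕ) : ℕ := Set.ncard {i | 1 ≤ i ∧ j ≤ g i}

/-- Containment of partitions: `ν ⊆ μ`. -/
def Sub (ν μ : NatPartition) : Prop := ∀ i, ν.f i ≤ μ.f i

/-- The cells (boxes) of the skew diagram `μ/ν`: pairs `(i,j)` with `i ≥ 1` and
`ν_i < j ≤ μ_i`. -/
def cells (μ ν : NatPartition) : Set (ℕ × ℕ) :=
  {c | 1 ≤ c.1 ∧ ν.f c.1 < c.2 ∧ c.2 ≤ μ.f c.1}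

/-- Two boxes share an edge. -/
def Adj (a b : ℕ × ℕ) : Prop :=
  (a.1 = b.1 ∧ (a.2 + 1 = b.2 ∨ b.2 + 1 = a.2)) ∨
  (a.2 = b.2 ∧ (a.1 + 1 = b.1 ∨ b.1 + 1 = a.1))

/-- A set of boxes is connected if any two of its boxes are joined by a chain of its
boxes, each sharing an edge with the next. -/
def IsConnected (s : Set (ℕ × ℕ)) : Prop :=
  ∀ a ∈ s, ∀ b ∈ s, Relation.ReflTransGen (fun x y => x ∈ s ∧ y ∈ s ∧ Adj x y) a b

/-- `μ/ν` is a border strip: `ν ⊆ μ`, and the skew diagram is nonempty, connected,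
and contains no 2×2 square. -/
def IsBorderStrip (μ ν : NatPartition) : Prop :=
  Sub ν μ ∧ (cells μ ν).Nonempty ∧ IsConnected (cells μ ν) ∧
    ¬ ∃ i j : ℕ, (i, j) ∈ cells μ ν ∧ (i + 1, j) ∈ cells μ ν ∧
      (i, j + 1) ∈ cells μ ν ∧ (i + 1, j + 1) ∈ cells μ ν

/-- The number of boxes of `μ/ν`. -/
noncomputable def stripSize (μ ν : NatPartition) : ℕ := (cells μ ν).ncard

/-- The number of rows that `μ/ν` occupies. -/
noncomputable def rows (μ ν : NatPartition) : ℕ := (Prod.fst '' cells μ ν).ncard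

/-- The number of columns that `μ/ν` occupies. -/
noncomputable def cols (μ ν : NatPartition) : ℕ := (Prod.snd '' cells μ ν).ncard

/-- The graph of the symplectic modification rule: `ModRule n μ i τ` holds iff
`i_{2n}(μ) = i < ∞` and `τ_{2n}(μ) = τ`. -/
inductive ModRule (n : ℕ) : NatPartition → ℕ → NatPartition → Prop
  | base (μ : NatPartition) (h : μ.len ≤ n) : ModRule n μ 0 μ
  | step (μ ν τ : NatPartition) (i : ℕ)
      (hlen : n < μ.len)
      (hbs : IsBorderStrip μ ν)
      (hsize : stripSize μ ν = 2 * (μ.len - n - 1))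
      (hbox : (μ.len, 1) ∈ cells μ ν)
      (hrec : ModRule n ν i τ) :
      ModRule n μ (cols μ ν + i) τ

/-- `i_{2n}(μ) ∈ ℕ∞`; it is `⊤ = ∞` exactly when the modification rule fails. -/
noncomputable def i2 (n : ℕ) (μ : NatPartition) : ℕ∞ :=
  sInf {c | ∃ i τ, ModRule n μ i τ ∧ c = (i : ℕ∞)}

-- `τ_{2n}(μ)`, defined (arbitrarily, as `μ` itself) when `i_{2n}(μ) = ∞`.
open Classical in
noncomputable def tau (n : ℕ) (μ : NatPartition) : NatPartition :=
  if h : ∃ it : ℕ × NatPartition, ModRule n μ it.1 it.2 then h.choose.2 else μ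

end NatPartition

/-
Peeling the first border strip `λ/ν` off `λ` needs `2(ℓ(λ) - n - 1)` boxes. Since `λ/ν` has no
2×2 square, `λ_{j+1} ≤ ν_j + 1`, so row `j` of the strip has at most `λ_j - λ_{j+1} + 1` boxes;
telescoping over the `ℓ(λ)` rows gives `|λ/ν| ≤ λ₁ + ℓ(λ) - 1`, and comparing the two bounds
yields `ℓ(λ) ≤ λ₁ + 2n + 1`.
-/

namespace NatPartition

theorem le_len_of_f_ne_zero (p : NatPartition) {i : ℕ} (h : p.f i ≠ 0) : i ≤ p.len := by
  obtain ⟨N, hN⟩ := p.ev_zero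
  refine le_csSup ⟨N, fun j hj => ?_⟩ h
  by_contra hlt
  exact hj (hN j (by omega))

theorem exists_modRule_of_i2_lt_top {n : ℕ} {μ : NatPartition} (h : i2 n μ < ⊤) :
    ∃ i τ, ModRule n μ i τ := by
  by_contra hnone
  have hempty : {c : ℕ∞ | ∃ i τ, ModRule n μ i τ ∧ c = (i : ℕ∞)} = ∅ :=
    Set.eq_empty_of_forall_notMem fun _ ⟨i, τ, hm, _⟩ => hnone ⟨i, τ, hm⟩
  rw [i2, hempty, sInf_empty] at h
  exact lt_irrefl _ h

theorem mem_cells {μ ν : NatPartition} {a b : ℕ} :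
    (a, b) ∈ cells μ ν ↔ 1 ≤ a ∧ ν.f a < b ∧ b ≤ μ.f a :=
  Iff.rfl

theorem stripSize_le_sum (μ ν : NatPartition) :
    stripSize μ ν ≤ ∑ j ∈ Finset.Icc 1 μ.len, (μ.f j - ν.f j) := by
  classical
  set F : Finset (ℕ × ℕ) :=
    (Finset.Icc 1 μ.len).biUnion fun j => {j} ×ˢ Finset.Icc (ν.f j + 1) (μ.f j)
  have hcells : cells μ ν ⊆ F := by
    rintro ⟨a, b⟩ hab
    obtain ⟨ha, hνb, hbμ⟩ := mem_cells.mp hab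
    have haL : a ≤ μ.len := μ.le_len_of_f_ne_zero (by omega)
    simp only [F, Finset.coe_biUnion, Finset.mem_coe, Finset.mem_Icc, Set.mem_iUnion,
      Finset.mem_product, Finset.mem_singleton]
    exact ⟨a, ⟨ha, haL⟩, rfl, by omega, hbμ⟩
  calc stripSize μ ν ≤ (F : Set (ℕ × ℕ)).ncard := Set.ncard_le_ncard hcells F.finite_toSet
    _ = F.card := Set.ncard_coe_finset F
    _ ≤ ∑ j ∈ Finset.Icc 1 μ.len, ({j} ×ˢ Finset.Icc (ν.f j + 1) (μ.f j)).card :=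
      Finset.card_biUnion_le
    _ = ∑ j ∈ Finset.Icc 1 μ.len, (μ.f j - ν.f j) := by
      refine Finset.sum_congr rfl fun j _ => ?_
      rw [Finset.card_product, Finset.card_singleton, Nat.card_Icc]
      omega

section BorderStrip

variable {μ ν : NatPartition}

theorem IsBorderStrip.f_succ_le (h : IsBorderStrip μ ν) {i : ℕ} (hi : 1 ≤ i) :
    μ.f (i + 1) ≤ ν.f i + 1 := by
  by_contra! hlt
  have hμ := μ.antitone hi (Nat.le_add_right i 1)
  have hν := ν.antitone hi (Nat.le_add_right i 1)
  exact h.2.2.2 ⟨i, ν.f i + 1, mem_cells.mpr ⟨hi, by omega, by omega⟩,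
    mem_cells.mpr ⟨by omega, by omega, by omega⟩, mem_cells.mpr ⟨hi, by omega, by omega⟩,
    mem_cells.mpr ⟨by omega, by omega, by omega⟩⟩

theorem IsBorderStrip.sum_add_f_succ_le (h : IsBorderStrip μ ν) (k : ℕ) :
    ∑ j ∈ Finset.Icc 1 k, (μ.f j - ν.f j) + μ.f (k + 1) ≤ μ.f 1 + k := by
  induction k with
  | zero => simp
  | succ k ih =>
    rw [Finset.sum_Icc_succ_top (by omega)]
    have hrow := h.f_succ_le (i := k + 1) (by omega)
    have hsub := h.1 (k + 1)
    omega

theorem IsBorderStrip.one_le_len (h : IsBorderStrip μ ν) : 1 ≤ μ.len := by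
  obtain ⟨⟨a, b⟩, hab⟩ := h.2.1
  obtain ⟨ha, hνb, hbμ⟩ := mem_cells.mp hab
  exact ha.trans (μ.le_len_of_f_ne_zero (by omega))

theorem IsBorderStrip.stripSize_add_one_le (h : IsBorderStrip μ ν) :
    stripSize μ ν + 1 ≤ μ.f 1 + μ.len := by
  obtain ⟨k, hk⟩ : ∃ k, μ.len = k + 1 := ⟨μ.len - 1, by have := h.one_le_len; omega⟩
  have hsize := stripSize_le_sum μ ν
  rw [hk, Finset.sum_Icc_succ_top (by omega)] at hsize
  have := h.sum_add_f_succ_le k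
  omega

end BorderStrip

end NatPartition

open NatPartition in
/-- If `i_{2n}(λ) < ∞` then `ℓ(λ) ≤ λ₁ + 2n + 1`. -/
theorem statement8 (n : ℕ) (lam : NatPartition) (hfin : i2 n lam < ⊤) :
    lam.len ≤ lam.f 1 + 2 * n + 1 := by
  obtain ⟨_, _, hrule⟩ := exists_modRule_of_i2_lt_top hfin
  cases hrule with
  | base _ hlen => omega
  | step _ _ _ _ hlen hbs hsize _ _ =>
    have := hbs.stripSize_add_one_le
    omega
end

section
/- Let n ≥ 0 and i ≥ 0, and consider the single-column partition (1^i). If 0 ≤ i ≤ n, then i_{2n}((1^i)) = 0 and τ_{2n}((1^i)) = (1^i). If n+2 ≤ i ≤ 2n+2, then i_{2n}((1^i)) = 1 and τ_{2n}((1^i)) = (1^{2n+2−i}). If i = n+1 or i > 2n+2, then i_{2n}((1^i)) = ∞. -/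
/-- A partition: a weakly decreasing sequence of nonnegative integers, indexed starting at 1
(`f 0 = 0` by convention), with finitely many nonzero terms. `f i` is the part `λ_i`. -/
structure PartitionSeq where
  f : ℕ → ℕ
  f_zero : f 0 = 0
  antitone : ∀ ⦃i j : ℕ⦄, 1 ≤ i → i ≤ j → f j ≤ f i
  ev_zero : ∃ N, ∀ i, N ≤ i → f i = 0

namespace PartitionSeq

/-- The number of nonzero parts `ℓ(λ)`. -/
noncomputable def len (p : PartitionSeq) : ℕ := sSup {i | p.f i ≠ 0}

/-- The size `|λ| = Σ_i λ_i`. -/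
noncomputable def size (p : PartitionSeq) : ℕ := ∑ᶠ i, p.f i

/-- The transpose (conjugate): `g† j = #{i ≥ 1 : g i ≥ j}`. -/
noncomputable def conjFun (g : ℕ → ℕ) (j : ℕ) : ℕ := Set.ncard {i | 1 ≤ i ∧ j ≤ g i}

/-- Containment of partitions: `ν ⊆ μ`. -/
def Sub (ν μ : PartitionSeq) : Prop := ∀ i, ν.f i ≤ μ.f i

/-- The cells (boxes) of the skew diagram `μ/ν`: pairs `(i,j)` with `i ≥ 1` and
`ν_i < j ≤ μ_i`. -/
def cells (μ ν : PartitionSeq) : Set (ℕ × ℕ) :=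
  {c | 1 ≤ c.1 ∧ ν.f c.1 < c.2 ∧ c.2 ≤ μ.f c.1}

/-- Two boxes share an edge. -/
def Adj (a b : ℕ × ℕ) : Prop :=
  (a.1 = b.1 ∧ (a.2 + 1 = b.2 ∨ b.2 + 1 = a.2)) ∨
  (a.2 = b.2 ∧ (a.1 + 1 = b.1 ∨ b.1 + 1 = a.1))

/-- A set of boxes is connected if any two of its boxes are joined by a chain of its
boxes, each sharing an edge with the next. -/
def IsConnected (s : Set (ℕ × ℕ)) : Prop :=
  ∀ a ∈ s, ∀ b ∈ s, Relation.ReflTransGen (fun x y => x ∈ s ∧ y ∈ s ∧ Adj x y) a b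

/-- `μ/ν` is a border strip: `ν ⊆ μ`, and the skew diagram is nonempty, connected,
and contains no 2×2 square. -/
def IsBorderStrip (μ ν : PartitionSeq) : Prop :=
  Sub ν μ ∧ (cells μ ν).Nonempty ∧ IsConnected (cells μ ν) ∧
    ¬ ∃ i j : ℕ, (i, j) ∈ cells μ ν ∧ (i + 1, j) ∈ cells μ ν ∧
      (i, j + 1) ∈ cells μ ν ∧ (i + 1, j + 1) ∈ cells μ ν

/-- The number of boxes of `μ/ν`. -/
noncomputable def stripSize (μ ν : PartitionSeq) : ℕ := (cells μ ν).ncard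

/-- The number of rows that `μ/ν` occupies. -/
noncomputable def rows (μ ν : PartitionSeq) : ℕ := (Prod.fst '' cells μ ν).ncard

/-- The number of columns that `μ/ν` occupies. -/
noncomputable def cols (μ ν : PartitionSeq) : ℕ := (Prod.snd '' cells μ ν).ncard

/-- The graph of the symplectic modification rule: `ModRule n μ i τ` holds iff
`i_{2n}(μ) = i < ∞` and `τ_{2n}(μ) = τ`. -/
inductive ModRule (n : ℕ) : PartitionSeq → ℕ → PartitionSeq → Prop
  | base (μ : PartitionSeq) (h : μ.len ≤ n) : ModRule n μ 0 μ
  | step (μ ν τ : PartitionSeq) (i : ℕ)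
      (hlen : n < μ.len)
      (hbs : IsBorderStrip μ ν)
      (hsize : stripSize μ ν = 2 * (μ.len - n - 1))
      (hbox : (μ.len, 1) ∈ cells μ ν)
      (hrec : ModRule n ν i τ) :
      ModRule n μ (cols μ ν + i) τ

/-- `i_{2n}(μ) ∈ ℕ∞`; it is `⊤ = ∞` exactly when the modification rule fails. -/
noncomputable def i2 (n : ℕ) (μ : PartitionSeq) : ℕ∞ :=
  sInf {c | ∃ i τ, ModRule n μ i τ ∧ c = (i : ℕ∞)}

-- `τ_{2n}(μ)`, defined (arbitrarily, as `μ` itself) when `i_{2n}(μ) = ∞`.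
open Classical in
noncomputable def tau (n : ℕ) (μ : PartitionSeq) : PartitionSeq :=
  if h : ∃ it : ℕ × PartitionSeq, ModRule n μ it.1 it.2 then h.choose.2 else μ

end PartitionSeq

namespace PartitionSeq

/-- The single-column partition `(1^m)`. -/
def col (m : ℕ) : PartitionSeq where
  f := fun j => if 1 ≤ j ∧ j ≤ m then 1 else 0
  f_zero := by simp
  antitone := by
    intro i j hi hij
    try dsimp only
    split_ifs <;> omega
  ev_zero := ⟨m + 1, fun i hi => by simp only [ite_eq_right_iff]; omega⟩

end PartitionSeq

/-!
Every partition contained in a column is a column, so the only candidate strip for `(1^i)` with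
`i > n` is its bottom `2(i - n - 1)` boxes: a vertical strip occupying one column. It exists
exactly when `0 < 2(i - n - 1) ≤ i`, and it leaves `(1^(2n+2-i))`, whose length is `≤ n`,
so the rule stops after that single step; in all other cases no step is possible.
-/

namespace PartitionSeq

@[ext]
theorem ext {p q : PartitionSeq} (h : p.f = q.f) : p = q := by
  cases p; cases q; cases h; rfl

section ModRule

variable {n : ℕ} {μ : PartitionSeq}

theorem ModRule.eq_of_len_le {k : ℕ} {τ : PartitionSeq} (hμ : μ.len ≤ n)
    (h : ModRule n μ k τ) : k = 0 ∧ τ = μ := by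
  cases h with
  | base => exact ⟨rfl, rfl⟩
  | step _ _ _ _ hlen => omega

theorem i2_eq_and_tau_eq_of_modRule_iff {k : ℕ} {τ : PartitionSeq}
    (h : ∀ k' τ', ModRule n μ k' τ' ↔ k' = k ∧ τ' = τ) : i2 n μ = k ∧ tau n μ = τ := by
  have hex : ∃ it : ℕ × PartitionSeq, ModRule n μ it.1 it.2 := ⟨(k, τ), (h k τ).2 ⟨rfl, rfl⟩⟩
  have hvals : {c : ℕ∞ | ∃ k' τ', ModRule n μ k' τ' ∧ c = k'} = {(k : ℕ∞)} := by
    ext c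
    simp [h]
  exact ⟨by rw [i2, hvals, sInf_singleton], by rw [tau, dif_pos hex, ((h _ _).1 hex.choose_spec).2]⟩

theorem i2_eq_top_of_forall_not_modRule (h : ∀ k τ, ¬ ModRule n μ k τ) : i2 n μ = ⊤ := by
  have hvals : {c : ℕ∞ | ∃ k τ, ModRule n μ k τ ∧ c = k} = ∅ := by
    ext c
    simp [h]
  rw [i2, hvals, sInf_empty]

end ModRule

theorem col_f (m j : ℕ) : (col m).f j = if 1 ≤ j ∧ j ≤ m then 1 else 0 := rfl

theorem col_len (m : ℕ) : (col m).len = m := by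
  have hsupp : {j | (col m).f j ≠ 0} = Set.Icc 1 m := by
    ext j
    simp [col_f]
  rw [len, hsupp]
  rcases Nat.eq_zero_or_pos m with rfl | hm
  · simp
  · exact csSup_Icc hm

theorem exists_eq_col_of_forall_le_one {ν : PartitionSeq} (h : ∀ j, ν.f j ≤ 1) :
    ∃ m, ν = col m := by
  have hfin : ∃ m, ν.f (m + 1) = 0 := by
    obtain ⟨N, hN⟩ := ν.ev_zero
    exact ⟨N, hN _ N.le_succ⟩
  refine ⟨Nat.find hfin, PartitionSeq.ext (funext fun j => ?_)⟩
  rw [col_f]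
  split_ifs with hj
  · have := Nat.find_min hfin (m := j - 1) (by omega)
    rw [Nat.sub_add_cancel hj.1] at this
    have := h j
    omega
  · rcases Nat.eq_zero_or_pos j with rfl | hj0
    · exact ν.f_zero
    · have := ν.antitone (Nat.le_add_left 1 (Nat.find hfin)) (show Nat.find hfin + 1 ≤ j by omega)
      have := Nat.find_spec hfin
      omega

theorem exists_eq_col_of_sub_col {ν : PartitionSeq} {i : ℕ} (h : Sub ν (col i)) :
    ∃ m, ν = col m :=
  exists_eq_col_of_forall_le_one fun j => (h j).trans (by rw [col_f]; split_ifs <;> omega)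

theorem cells_col (i m : ℕ) : cells (col i) (col m) = Set.Ioc m i ×ˢ {1} := by
  ext ⟨a, b⟩
  simp only [cells, col_f, Set.mem_ofPred_eq, Set.mem_prod, Set.mem_Ioc, Set.mem_singleton_iff]
  split_ifs <;> omega

theorem stripSize_col (i m : ℕ) : stripSize (col i) (col m) = i - m := by
  rw [stripSize, cells_col, Set.ncard_prod, Set.ncard_Ioc_nat, Set.ncard_singleton, mul_one]

theorem cols_col {i m : ℕ} (hm : m < i) : cols (col i) (col m) = 1 := by
  rw [cols, cells_col, Set.snd_image_prod (⟨i, hm, le_rfl⟩ : (Set.Ioc m i).Nonempty),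
    Set.ncard_singleton]

theorem isConnected_Ioc_prod_singleton (m i c : ℕ) : IsConnected (Set.Ioc m i ×ˢ {c}) := by
  have hmem : ∀ a, m < a → a ≤ i → (a, c) ∈ Set.Ioc m i ×ˢ ({c} : Set ℕ) :=
    fun a h₁ h₂ => ⟨⟨h₁, h₂⟩, rfl⟩
  rintro p ⟨⟨hp₁, hp₂⟩, hpc⟩ q ⟨⟨hq₁, hq₂⟩, hqc⟩
  rw [show p = (p.1, c) from Prod.ext rfl hpc, show q = (q.1, c) from Prod.ext rfl hqc]
  refine Relation.ReflTransGen.lift (·, c) (fun _ _ h => h) _ _ (reflTransGen_of_succ _ ?_ ?_)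
  · rintro j ⟨hj₁, hj₂⟩
    exact ⟨hmem j (by omega) (by omega), hmem (j + 1) (by omega) (by omega),
      Or.inr ⟨rfl, Or.inl rfl⟩⟩
  · rintro j ⟨hj₁, hj₂⟩
    exact ⟨hmem (j + 1) (by omega) (by omega), hmem j (by omega) (by omega),
      Or.inr ⟨rfl, Or.inr rfl⟩⟩

theorem isBorderStrip_col {i m : ℕ} (hm : m < i) : IsBorderStrip (col i) (col m) := by
  refine ⟨fun j => ?_, ?_, ?_, ?_⟩
  · simp only [col_f]
    split_ifs <;> omega
  · exact ⟨(i, 1), by rw [cells_col]; exact ⟨⟨hm, le_rfl⟩, rfl⟩⟩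
  · rw [cells_col]
    exact isConnected_Ioc_prod_singleton m i 1
  · rintro ⟨a, b, hab, -, hab', -⟩
    rw [cells_col] at hab hab'
    have hb : b = 1 := hab.2
    have hb' : b + 1 = 1 := hab'.2
    omega

theorem modRule_col_iff {n i k : ℕ} {τ : PartitionSeq} :
    ModRule n (col i) k τ ↔
      (i ≤ n ∧ k = 0 ∧ τ = col i) ∨
        (n + 2 ≤ i ∧ i ≤ 2 * n + 2 ∧ k = 1 ∧ τ = col (2 * n + 2 - i)) := by
  constructor
  · rintro (⟨_, hlen⟩ | ⟨_, ν, τ, k, hlen, hbs, hsize, hbox, hrec⟩)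
    · exact Or.inl ⟨by rwa [col_len] at hlen, rfl, rfl⟩
    · obtain ⟨m, rfl⟩ := exists_eq_col_of_sub_col hbs.1
      rw [col_len] at hlen hsize hbox
      rw [stripSize_col] at hsize
      rw [cells_col] at hbox
      have hmi : m < i := hbox.1.1
      obtain ⟨rfl, rfl⟩ := hrec.eq_of_len_le (by rw [col_len]; omega)
      exact Or.inr ⟨by omega, by omega, cols_col hmi, by congr 1; omega⟩
  · rintro (⟨hi, rfl, rfl⟩ | ⟨hi, hi', rfl, rfl⟩)
    · exact .base _ (by rwa [col_len])
    · have hmi : 2 * n + 2 - i < i := by omega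
      have hstep := ModRule.step (n := n) (col i) _ _ 0 (by rw [col_len]; omega)
        (isBorderStrip_col hmi)
        (by rw [stripSize_col, col_len]; omega)
        (by rw [cells_col, col_len]; exact ⟨⟨hmi, le_rfl⟩, rfl⟩)
        (.base (col (2 * n + 2 - i)) (by rw [col_len]; omega))
      simpa [cols_col hmi] using hstep

end PartitionSeq

open PartitionSeq in
/-- The symplectic modification rule on single columns `(1^i)`. -/
theorem statement9 (n i : ℕ) :
    (i ≤ n → i2 n (col i) = 0 ∧ tau n (col i) = col i) ∧
    (n + 2 ≤ i → i ≤ 2 * n + 2 → i2 n (col i) = 1 ∧ tau n (col i) = col (2 * n + 2 - i)) ∧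
    (i = n + 1 ∨ 2 * n + 2 < i → i2 n (col i) = ⊤) := by
  refine ⟨fun h => ?_, fun h₁ h₂ => ?_, fun h => ?_⟩
  · exact_mod_cast i2_eq_and_tau_eq_of_modRule_iff fun k τ => by
      rw [modRule_col_iff]
      grind
  · exact_mod_cast i2_eq_and_tau_eq_of_modRule_iff fun k τ => by
      rw [modRule_col_iff]
      grind
  · exact i2_eq_top_of_forall_not_modRule fun k τ => by
      rw [modRule_col_iff]
      omega
end
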